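/- arXiv:2404.17301 — 13 statements merged into one kernel-verified Lean document; each statement's English description precedes it below -/
import Mathlib

section
/- Let c, d ≥ 2 be integers and let k ≤ 0 be an integer. Let q be the unique integer with 0 ≤ q < c+d-2 and min(c-1,d-1)·(1-k) ≡ q (mod c+d-2). Then |W̃_k| + |X̃_k| + (gcd(c-1,d-1) - 1)·|Ỹ_k| + Σ_{j=1}^{d-1} |Z̃_{j,k}| equals: gcd(c-1,d-1) + 1 if q = 0; q + 1 if 1 ≤ q ≤ min(c,d) - 1; min(c,d) if min(c,d) - 1 < q ≤ max(c,d) - 1; and (c+d-2) - q + 1 if max(c,d) - 1 < q ≤ (c+d-2) - 1. -/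
/-!
Put `N = c + d - 2` and `B = (c - 1) * (1 - k)`. Each of the sets consists of the `m` for
which `N * m` lies in a window `(b - L, b]`, with `b` a small shift of `B`, so its size is
`b / N - (b - L) / N`; for `L ≤ N` this is `1` or `0` according as `b % N < L`. Hence
everything is a function of `s = B % N`: `|W̃| + |X̃| = 1 + [s < d]`, `|Ỹ| = [s = 0]`, and
`Z̃_j` is a singleton exactly when `s - c + 2 ≤ j ≤ s - 1`. On the other side,
`(c - 1) + (d - 1) = N` gives `q ≡ ±B (mod N)`, so `q = s` or `q = N - s`, and the case
formula is invariant under `q ↦ N - q`.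
-/

namespace Int

theorem setOf_lt_mul_le_eq_Ioc {N : ℤ} (hN : 0 < N) (a b : ℤ) :
    {m : ℤ | a < N * m ∧ N * m ≤ b} = Set.Ioc (a / N) (b / N) := by
  ext m
  simp only [Set.mem_ofPred_eq, Set.mem_Ioc, Int.ediv_lt_iff_lt_mul hN,
    Int.le_ediv_iff_mul_le hN, mul_comm m N]

theorem ncard_setOf_lt_mul_le {N a b : ℤ} (hN : 0 < N) (hab : a ≤ b) :
    ({m : ℤ | a < N * m ∧ N * m ≤ b}.ncard : ℤ) = b / N - a / N := by
  rw [setOf_lt_mul_le_eq_Ioc hN, ← Finset.coe_Ioc, Set.ncard_coe_finset, Int.card_Ioc,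
    Int.toNat_of_nonneg (by linarith [Int.ediv_le_ediv hN hab])]

theorem sub_emod_eq_ite {N t : ℤ} (hN : 0 < N) (ht₀ : 0 ≤ t) (htN : t ≤ N) (b : ℤ) :
    (b - t) % N = if t ≤ b % N then b % N - t else b % N - t + N := by
  have hs₀ := Int.emod_nonneg b hN.ne'
  have hsN := Int.emod_lt_of_pos b hN
  have hshift : (b - t) % N = (b % N - t) % N := by
    conv_lhs => rw [← Int.emod_add_mul_ediv b N]
    rw [show b % N + N * (b / N) - t = b % N - t + (b / N) * N by ring,
      Int.add_mul_emod_self_right]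
  split_ifs with h
  · rw [hshift, Int.emod_eq_of_lt (by omega) (by omega)]
  · rw [hshift, ← Int.add_emod_right, Int.emod_eq_of_lt (by omega) (by omega)]

theorem ediv_sub_ediv_sub_eq_ite {N L : ℤ} (hN : 0 < N) (hL₀ : 0 ≤ L) (hLN : L ≤ N)
    (b : ℤ) :
    b / N - (b - L) / N = if b % N < L then 1 else 0 := by
  have hb := Int.emod_add_mul_ediv b N
  have hbL := Int.emod_add_mul_ediv (b - L) N
  rw [sub_emod_eq_ite hN hL₀ hLN] at hbL
  apply mul_left_cancel₀ hN.ne'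
  split_ifs at hbL ⊢ <;> linarith

end Int

namespace LoopRank

variable {c d k : ℤ}

theorem setOf_W_eq (hc : 2 ≤ c) (hd : 2 ≤ d) (hk : k ≤ 0) :
    {m : ℤ | m ≤ -k ∧ 1 ≤ -(c + d - 2) * m - (c - 1) * k ∧
        -(c + d - 2) * m - (c - 1) * k ≤ 2 * (d - 1)} =
      {m : ℤ | (c - 1) * (1 - k) - d - (c + d - 2) < (c + d - 2) * m ∧
        (c + d - 2) * m ≤ (c - 1) * (1 - k) - c} := by
  ext m
  simp only [Set.mem_ofPred_eq]
  refine ⟨fun ⟨_, h₁, h₂⟩ => ⟨by linarith, by linarith⟩,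
    fun ⟨h₁, h₂⟩ => ⟨?_, by linarith, by linarith⟩⟩
  have : (c + d - 2) * m < (c + d - 2) * -k := by nlinarith
  exact (lt_of_mul_lt_mul_left this (by omega)).le

theorem setOf_X_eq (hc : 2 ≤ c) (hd : 2 ≤ d) (hk : k ≤ 0) :
    {m : ℤ | 0 ≤ m ∧ 0 ≤ (c + d - 2) * m + (c - 1) * k ∧
        (c + d - 2) * m + (c - 1) * k ≤ c - 1} =
      {m : ℤ | (c - 1) * (1 - k) - c < (c + d - 2) * m ∧
        (c + d - 2) * m ≤ (c - 1) * (1 - k)} := by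
  ext m
  simp only [Set.mem_ofPred_eq]
  refine ⟨fun ⟨_, h₁, h₂⟩ => ⟨by linarith, by linarith⟩,
    fun ⟨h₁, h₂⟩ => ⟨?_, by linarith, by linarith⟩⟩
  exact nonneg_of_mul_nonneg_right (by nlinarith) (by omega : (0 : ℤ) < c + d - 2)

theorem setOf_Y_eq (hc : 2 ≤ c) (hd : 2 ≤ d) (hk : k ≤ 0) :
    {m : ℤ | 0 ≤ m ∧ (c + d - 2) * m = (c - 1) * (1 - k)} =
      {m : ℤ | (c - 1) * (1 - k) - 1 < (c + d - 2) * m ∧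
        (c + d - 2) * m ≤ (c - 1) * (1 - k)} := by
  ext m
  simp only [Set.mem_ofPred_eq]
  refine ⟨fun ⟨_, h⟩ => ⟨by omega, h.le⟩, fun ⟨h₁, h₂⟩ => ⟨?_, by omega⟩⟩
  exact nonneg_of_mul_nonneg_right (by nlinarith) (by omega : (0 : ℤ) < c + d - 2)

theorem setOf_Z_eq (j : ℤ) :
    {m : ℤ | 1 ≤ (c + d - 2) * m + j + (c - 1) * k ∧
        (c + d - 2) * m + j + (c - 1) * k ≤ c - 2} =
      {m : ℤ | (c - 1) * (1 - k) - (j + 1) - (c - 2) < (c + d - 2) * m ∧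
        (c + d - 2) * m ≤ (c - 1) * (1 - k) - (j + 1)} := by
  ext m
  simp only [Set.mem_ofPred_eq]
  constructor <;> rintro ⟨h₁, h₂⟩ <;> constructor <;> linarith

theorem ncard_W_add_ncard_X (hc : 2 ≤ c) (hd : 2 ≤ d) (hk : k ≤ 0) :
    ({m : ℤ | m ≤ -k ∧ 1 ≤ -(c + d - 2) * m - (c - 1) * k ∧
          -(c + d - 2) * m - (c - 1) * k ≤ 2 * (d - 1)}.ncard : ℤ) +
      ({m : ℤ | 0 ≤ m ∧ 0 ≤ (c + d - 2) * m + (c - 1) * k ∧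
          (c + d - 2) * m + (c - 1) * k ≤ c - 1}.ncard : ℤ) =
      if (c - 1) * (1 - k) % (c + d - 2) < d then 2 else 1 := by
  have hN : (0 : ℤ) < c + d - 2 := by omega
  rw [setOf_W_eq hc hd hk, setOf_X_eq hc hd hk, Int.ncard_setOf_lt_mul_le hN (by omega),
    Int.ncard_setOf_lt_mul_le hN (by omega), Int.sub_ediv_of_dvd _ dvd_rfl, Int.ediv_self hN.ne']
  have := Int.ediv_sub_ediv_sub_eq_ite hN (by omega : 0 ≤ d) (by omega) ((c - 1) * (1 - k))
  split_ifs at this ⊢ <;> linarith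

theorem ncard_Y (hc : 2 ≤ c) (hd : 2 ≤ d) (hk : k ≤ 0) :
    ({m : ℤ | 0 ≤ m ∧ (c + d - 2) * m = (c - 1) * (1 - k)}.ncard : ℤ) =
      if (c - 1) * (1 - k) % (c + d - 2) = 0 then 1 else 0 := by
  have hN : (0 : ℤ) < c + d - 2 := by omega
  rw [setOf_Y_eq hc hd hk, Int.ncard_setOf_lt_mul_le hN (by omega),
    Int.ediv_sub_ediv_sub_eq_ite hN zero_le_one (by omega)]
  have := Int.emod_nonneg ((c - 1) * (1 - k)) hN.ne'
  split_ifs <;> omega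

theorem ncard_Z (hc : 2 ≤ c) (hd : 2 ≤ d) {j : ℤ} (hj : j ∈ Finset.Icc 1 (d - 1)) :
    ({m : ℤ | 1 ≤ (c + d - 2) * m + j + (c - 1) * k ∧
        (c + d - 2) * m + j + (c - 1) * k ≤ c - 2}.ncard : ℤ) =
      if j ∈ Finset.Icc ((c - 1) * (1 - k) % (c + d - 2) - c + 2)
          ((c - 1) * (1 - k) % (c + d - 2) - 1) then 1 else 0 := by
  have hN : (0 : ℤ) < c + d - 2 := by omega
  rw [Finset.mem_Icc] at hj
  rw [setOf_Z_eq, Int.ncard_setOf_lt_mul_le hN (by omega),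
    Int.ediv_sub_ediv_sub_eq_ite hN (by omega) (by omega),
    Int.sub_emod_eq_ite hN (by omega) (by omega)]
  simp only [Finset.mem_Icc]
  have := Int.emod_nonneg ((c - 1) * (1 - k)) hN.ne'
  split_ifs <;> omega

theorem sum_ncard_Z (hc : 2 ≤ c) (hd : 2 ≤ d) :
    ∑ j ∈ Finset.Icc (1 : ℤ) (d - 1),
        ({m : ℤ | 1 ≤ (c + d - 2) * m + j + (c - 1) * k ∧
            (c + d - 2) * m + j + (c - 1) * k ≤ c - 2}.ncard : ℤ) =
      (Finset.Icc (max 1 ((c - 1) * (1 - k) % (c + d - 2) - c + 2))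
        (min (d - 1) ((c - 1) * (1 - k) % (c + d - 2) - 1))).card := by
  rw [Finset.sum_congr rfl fun j hj => ncard_Z hc hd hj, Finset.sum_boole,
    Finset.filter_mem_eq_inter]
  congr 2
  ext j
  simp only [Finset.mem_inter, Finset.mem_Icc]
  omega

theorem emod_cases_of_modEq_min {q : ℤ} (hc : 2 ≤ c) (hd : 2 ≤ d) (hq₀ : 0 ≤ q)
    (hq₁ : q < c + d - 2) (hq : min (c - 1) (d - 1) * (1 - k) ≡ q [ZMOD (c + d - 2)]) :
    q = (c - 1) * (1 - k) % (c + d - 2) ∨ q + (c - 1) * (1 - k) % (c + d - 2) = c + d - 2 := by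
  have hN : (0 : ℤ) < c + d - 2 := by omega
  have hq_emod : q % (c + d - 2) = q := Int.emod_eq_of_lt hq₀ hq₁
  rcases le_total c d with hcd | hdc
  · rw [min_eq_left (by omega)] at hq
    exact .inl (hq_emod ▸ hq.eq.symm)
  · rw [min_eq_right (by omega),
      show (d - 1) * (1 - k) = -((c - 1) * (1 - k)) + (1 - k) * (c + d - 2) by ring] at hq
    have := hq.eq
    rw [Int.add_mul_emod_self_right, hq_emod, Int.neg_emod, Int.natAbs_of_nonneg hN.le] at this
    split_ifs at this with hdvd
    · exact .inl (this ▸ (Int.emod_eq_zero_of_dvd hdvd).symm)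
    · exact .inr (by omega)

end LoopRank

/-- Theorem 4.5 (loop type): the combinatorial formula for the rank of
`SH^{2k}` of the Milnor fiber of `x₁²+x₂²+x₃^c x₄+x₃ x₄^d`. -/
theorem loop_rank_formula (c d k q : ℤ) (hc : 2 ≤ c) (hd : 2 ≤ d) (hk : k ≤ 0)
    (hq0 : 0 ≤ q) (hq1 : q < c + d - 2)
    (hq : min (c - 1) (d - 1) * (1 - k) ≡ q [ZMOD (c + d - 2)]) :
    (({m : ℤ | m ≤ -k ∧ 1 ≤ -(c + d - 2) * m - (c - 1) * k ∧
          -(c + d - 2) * m - (c - 1) * k ≤ 2 * (d - 1)}.ncard : ℤ) +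
      ({m : ℤ | 0 ≤ m ∧ 0 ≤ (c + d - 2) * m + (c - 1) * k ∧
          (c + d - 2) * m + (c - 1) * k ≤ c - 1}.ncard : ℤ) +
      ((Int.gcd (c - 1) (d - 1) : ℤ) - 1) *
        ({m : ℤ | 0 ≤ m ∧ (c + d - 2) * m = (c - 1) * (1 - k)}.ncard : ℤ) +
      ∑ j ∈ Finset.Icc (1 : ℤ) (d - 1),
        ({m : ℤ | 1 ≤ (c + d - 2) * m + j + (c - 1) * k ∧
            (c + d - 2) * m + j + (c - 1) * k ≤ c - 2}.ncard : ℤ)) =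
      if q = 0 then (Int.gcd (c - 1) (d - 1) : ℤ) + 1
      else if q ≤ min c d - 1 then q + 1
      else if q ≤ max c d - 1 then min c d
      else (c + d - 2) - q + 1 := by
  have hN : (0 : ℤ) < c + d - 2 := by omega
  have hs₀ := Int.emod_nonneg ((c - 1) * (1 - k)) hN.ne'
  have hsN := Int.emod_lt_of_pos ((c - 1) * (1 - k)) hN
  have hqs := LoopRank.emod_cases_of_modEq_min hc hd hq0 hq1 hq
  rw [LoopRank.ncard_W_add_ncard_X hc hd hk, LoopRank.ncard_Y hc hd hk,
    LoopRank.sum_ncard_Z hc hd, Int.card_Icc]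
  generalize (c - 1) * (1 - k) % (c + d - 2) = s at *
  generalize (Int.gcd (c - 1) (d - 1) : ℤ) = g
  split_ifs <;> omega
end

section
/- Let e, f ≥ 2 be integers and let k ≤ 0 be an integer. Let q be the unique integer with 0 ≤ q < e+f and min(e,f)·(1-k) ≡ q (mod e+f). Then (gcd(e,f) - 1)·|F^{k-1}_{-1,-1}| + Σ_{i=0}^{e-2} Σ_{j=0}^{f-2} |F^k_{i,j}| equals: gcd(e,f) - 1 if q = 0; q - 1 if 1 ≤ q ≤ min(e,f); min(e,f) - 1 if min(e,f) < q ≤ max(e,f); and e + f - q - 1 if max(e,f) < q ≤ e + f - 1. -/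
lemma ncard_F (e f i j s : ℤ) (hN : 0 < e + f) :
    ({p : ℤ × ℤ | i + p.1 * e = j + p.2 * f ∧ 0 ≤ i + p.1 * e ∧
        p.1 + p.2 = -s}.ncard : ℤ) =
    if (e + f) ∣ (j - i - s * f) ∧ 0 ≤ i + ((j - i - s * f) / (e + f)) * e
    then 1 else 0 := by
  have hN0 : e + f ≠ 0 := hN.ne'
  set N := e + f with hNdef
  set D := j - i - s * f with hD
  have key : ∀ p : ℤ × ℤ, (i + p.1 * e = j + p.2 * f ∧ 0 ≤ i + p.1 * e ∧
      p.1 + p.2 = -s) ↔ (p.1 * N = D ∧ 0 ≤ i + p.1 * e ∧ p.2 = -s - p.1) := by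
    intro p
    constructor
    · rintro ⟨h1, h2, h3⟩
      refine ⟨?_, h2, by linarith⟩
      have : p.2 = -s - p.1 := by linarith
      rw [this] at h1; push_cast [hNdef, hD]; ring_nf; linarith [h1]
    · rintro ⟨h1, h2, h3⟩
      refine ⟨?_, h2, by linarith⟩
      rw [h3]; simp only [hNdef, hD] at h1 ⊢; ring_nf; ring_nf at h1; linarith
  split_ifs with h
  · obtain ⟨hdvd, hpos⟩ := h
    have hm : (D / N) * N = D := Int.ediv_mul_cancel hdvd
    have : {p : ℤ × ℤ | i + p.1 * e = j + p.2 * f ∧ 0 ≤ i + p.1 * e ∧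
        p.1 + p.2 = -s} = {(D / N, -s - D / N)} := by
      ext p
      simp only [Set.mem_setOf_eq, Set.mem_singleton_iff, key p, Prod.ext_iff]
      constructor
      · rintro ⟨h1, h2, h3⟩
        have : p.1 = D / N := by
          have := hm; nlinarith [h1]
        exact ⟨this, by rw [h3, this]⟩
      · rintro ⟨h1, h2⟩
        exact ⟨by rw [h1]; exact hm, by rw [h1]; exact hpos, by rw [h2, h1]⟩
    rw [this, Set.ncard_singleton]; norm_num
  · have : {p : ℤ × ℤ | i + p.1 * e = j + p.2 * f ∧ 0 ≤ i + p.1 * e ∧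
        p.1 + p.2 = -s} = ∅ := by
      ext p
      simp only [Set.mem_setOf_eq, Set.mem_empty_iff_false, iff_false, key p]
      rintro ⟨h1, h2, h3⟩
      apply h
      have hdvd : N ∣ D := ⟨p.1, by linarith [h1]⟩
      have : D / N = p.1 := by
        rw [← h1]; exact Int.mul_ediv_cancel _ hN0
      exact ⟨hdvd, by rw [this]; exact h2⟩
    rw [this, Set.ncard_empty]; norm_num

/-- A multiple of `N` strictly between `-N` and `2N` is `0` or `N`. -/
lemma dvd_cases (N x : ℤ) (hN : 0 < N) (hlb : -N < x) (hub : x < 2 * N)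
    (hd : N ∣ x) : x = 0 ∨ x = N := by
  obtain ⟨t, ht⟩ := hd
  have h0 : t = 0 ∨ t = 1 := by
    rcases lt_trichotomy t 0 with h | h | h
    · exfalso
      have : N * t ≤ N * (-1) := mul_le_mul_of_nonneg_left (by omega) hN.le
      linarith
    · left; exact h
    · rcases eq_or_lt_of_le (by omega : (1 : ℤ) ≤ t) with h2 | h2
      · right; exact h2.symm
      · exfalso
        have : N * 2 ≤ N * t := mul_le_mul_of_nonneg_left (by omega) hN.le
        linarith
  rcases h0 with rfl | rfl
  · left; simpa using ht
  · right; simpa using ht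

/-- For `0 ≤ j < N`, `N ∣ j - x ↔ j = x % N`. -/
lemma dvd_iff_eq_emod (N x j : ℤ) (hN : 0 < N) (hj0 : 0 ≤ j) (hj1 : j < N) :
    N ∣ (j - x) ↔ j = x % N := by
  have hmod : x % N = x - N * (x / N) := Int.emod_def x N
  have h0 : 0 ≤ x % N := Int.emod_nonneg _ hN.ne'
  have h1 : x % N < N := Int.emod_lt_of_pos _ hN
  constructor
  · rintro ⟨c, hc⟩
    have hje : j - x % N = N * (c + x / N) := by rw [hmod]; ring_nf; linarith [hc]
    have := dvd_cases N (j - x % N) hN (by omega) (by omega) ⟨c + x / N, hje⟩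
    omega
  · rintro rfl
    exact ⟨-(x / N), by rw [hmod]; ring⟩

/-- Theorem 4.11 (Fermat type): the combinatorial formula for the rank of
`SH^{2k}` of the Milnor fiber of `x₁²+x₂²+x₃^e+x₄^f`. -/
theorem fermat_rank_formula (e f k q : ℤ) (he : 2 ≤ e) (hf : 2 ≤ f) (hk : k ≤ 0)
    (hq0 : 0 ≤ q) (hq1 : q < e + f)
    (hq : min e f * (1 - k) ≡ q [ZMOD (e + f)]) :
    (((Int.gcd e f : ℤ) - 1) *
        ({p : ℤ × ℤ | -1 + p.1 * e = -1 + p.2 * f ∧ 0 ≤ -1 + p.1 * e ∧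
            p.1 + p.2 = -(k - 1)}.ncard : ℤ) +
      ∑ i ∈ Finset.Icc (0 : ℤ) (e - 2), ∑ j ∈ Finset.Icc (0 : ℤ) (f - 2),
        ({p : ℤ × ℤ | i + p.1 * e = j + p.2 * f ∧ 0 ≤ i + p.1 * e ∧
            p.1 + p.2 = -k}.ncard : ℤ)) =
      if q = 0 then (Int.gcd e f : ℤ) - 1
      else if q ≤ min e f then q - 1
      else if q ≤ max e f then min e f - 1
      else e + f - q - 1 := by
  have hN : 0 < e + f := by omega
  set N := e + f with hNdef
  have hqd : N ∣ (q - min e f * (1 - k)) := hq.dvd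
  have hdvd_ef : N ∣ ((1 - k) * e) ↔ N ∣ ((1 - k) * f) := by
    have hNk : N ∣ ((1 - k) * N) := dvd_mul_left N (1 - k)
    constructor <;> intro h
    · have h2 : (1 - k) * f = (1 - k) * N - (1 - k) * e := by rw [hNdef]; ring
      rw [h2]; exact dvd_sub hNk h
    · have h2 : (1 - k) * e = (1 - k) * N - (1 - k) * f := by rw [hNdef]; ring
      rw [h2]; exact dvd_sub hNk h
  have hminf : N ∣ ((1 - k) * min e f) ↔ N ∣ ((1 - k) * f) := by
    rcases le_total e f with h | h
    · rw [min_eq_left h]; exact hdvd_ef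
    · rw [min_eq_right h]
  have hdq : N ∣ ((1 - k) * f) ↔ q = 0 := by
    rw [← hminf]
    constructor
    · intro h
      have h2 : N ∣ q := by
        have h3 : q = (q - min e f * (1 - k)) + (1 - k) * min e f := by ring
        rw [h3]; exact dvd_add hqd h
      have := dvd_cases N q hN (by omega) (by omega) h2
      omega
    · intro h
      subst h
      have h2 : N ∣ (min e f * (1 - k) - 0) := by
        have := dvd_neg.mpr hqd; rwa [neg_sub] at this
      have h3 : (1 - k) * min e f = min e f * (1 - k) - 0 := by ring
      rw [h3]; exact h2
  -- First term
  have hfirst : ({p : ℤ × ℤ | -1 + p.1 * e = -1 + p.2 * f ∧ 0 ≤ -1 + p.1 * e ∧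
      p.1 + p.2 = -(k - 1)}.ncard : ℤ) = if q = 0 then 1 else 0 := by
    rw [ncard_F e f (-1) (-1) (k - 1) hN]
    have hD : (-1 : ℤ) - (-1) - (k - 1) * f = (1 - k) * f := by ring
    rw [hD]
    by_cases hq0' : q = 0
    · rw [if_pos hq0', if_pos]
      have hdvd : N ∣ ((1 - k) * f) := hdq.mpr hq0'
      refine ⟨hdvd, ?_⟩
      have hpos : 0 < (1 - k) * f := mul_pos (by omega) (by omega)
      obtain ⟨t, ht⟩ := hdvd
      have ht1 : 1 ≤ t := by
        by_contra hcon
        push_neg at hcon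
        have : N * t ≤ N * 0 := mul_le_mul_of_nonneg_left (by omega) hN.le
        linarith
      have hge : N ≤ (1 - k) * f := by
        have : N * 1 ≤ N * t := mul_le_mul_of_nonneg_left ht1 hN.le
        linarith
      have hdivge : 1 ≤ ((1 - k) * f) / N := by
        rw [Int.le_ediv_iff_mul_le hN]; linarith
      have := mul_le_mul_of_nonneg_right hdivge (by omega : (0 : ℤ) ≤ e)
      linarith
    · rw [if_neg hq0', if_neg]
      rintro ⟨h1, -⟩
      exact hq0' (hdq.mp h1)
  -- The double sum
  set c := (k * f) % N with hcdef
  have hc0 : 0 ≤ c := Int.emod_nonneg _ hN.ne'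
  have hc1 : c < N := Int.emod_lt_of_pos _ hN
  have hcd : N ∣ (c - k * f) := ⟨-(k * f / N), by rw [hcdef, Int.emod_def]; ring⟩
  clear_value c
  have hsum : (∑ i ∈ Finset.Icc (0 : ℤ) (e - 2), ∑ j ∈ Finset.Icc (0 : ℤ) (f - 2),
      ({p : ℤ × ℤ | i + p.1 * e = j + p.2 * f ∧ 0 ≤ i + p.1 * e ∧
          p.1 + p.2 = -k}.ncard : ℤ)) =
      (((min (e - 2) (if c ≤ f - 2 then f - 2 - c else N + f - 2 - c) + 1 -
          max 0 (if c ≤ f - 2 then 0 else N - c)).toNat : ℤ)) := by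
    have step1 : ∀ i ∈ Finset.Icc (0 : ℤ) (e - 2),
        (∑ j ∈ Finset.Icc (0 : ℤ) (f - 2),
          ({p : ℤ × ℤ | i + p.1 * e = j + p.2 * f ∧ 0 ≤ i + p.1 * e ∧
              p.1 + p.2 = -k}.ncard : ℤ)) =
        (if i ∈ Finset.Icc (if c ≤ f - 2 then (0 : ℤ) else N - c)
            (if c ≤ f - 2 then f - 2 - c else N + f - 2 - c) then (1 : ℤ) else 0) := by
      intro i hi
      rw [Finset.mem_Icc] at hi
      have step1a : ∀ j ∈ Finset.Icc (0 : ℤ) (f - 2),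
          ({p : ℤ × ℤ | i + p.1 * e = j + p.2 * f ∧ 0 ≤ i + p.1 * e ∧
              p.1 + p.2 = -k}.ncard : ℤ) =
          (if j = (i + k * f) % N then (1 : ℤ) else 0) := by
        intro j hj
        rw [Finset.mem_Icc] at hj
        rw [ncard_F e f i j k hN, ← hNdef]
        have hiff : (N ∣ (j - i - k * f) ∧ 0 ≤ i + ((j - i - k * f) / N) * e)
            ↔ j = (i + k * f) % N := by
          constructor
          · rintro ⟨h1, -⟩
            rw [← dvd_iff_eq_emod N (i + k * f) j hN hj.1 (by omega)]
            have h2 : j - (i + k * f) = j - i - k * f := by ring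
            rw [h2]; exact h1
          · intro h
            have h1 : N ∣ (j - i - k * f) := by
              have h2 := (dvd_iff_eq_emod N (i + k * f) j hN hj.1 (by omega)).mpr h
              have h3 : j - (i + k * f) = j - i - k * f := by ring
              rwa [h3] at h2
            refine ⟨h1, ?_⟩
            obtain ⟨t, ht⟩ := h1
            have hkf : 0 ≤ -(k * f) := by
              have : k * f ≤ 0 * f := mul_le_mul_of_nonneg_right hk (by omega)
              linarith
            have ht0 : 0 ≤ t := by
              by_contra hcon
              push_neg at hcon
              have : N * t ≤ N * (-1) := mul_le_mul_of_nonneg_left (by omega) hN.le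
              omega
            have hdiv : (j - i - k * f) / N = t := by
              rw [ht]; exact Int.mul_ediv_cancel_left _ hN.ne'
            rw [hdiv]
            have : 0 ≤ t * e := mul_nonneg ht0 (by omega)
            omega
        by_cases hcase : j = (i + k * f) % N
        · rw [if_pos (hiff.mpr hcase), if_pos hcase]
        · rw [if_neg (fun h => hcase (hiff.mp h)), if_neg hcase]
      rw [Finset.sum_congr rfl step1a,
        Finset.sum_ite_eq' (Finset.Icc (0 : ℤ) (f - 2)) _ (fun _ => (1 : ℤ))]
      have hcm : c % N = (k * f) % N := by
        rw [hcdef]; exact Int.emod_emod_of_dvd _ dvd_rfl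
      have h1 : (i + k * f) % N = (i + c) % N := ((Int.ModEq.add_left i hcm).symm : _)
      have hmodval : (i + k * f) % N = if i + c < N then i + c else i + c - N := by
        rw [h1]
        split_ifs with h2
        · exact Int.emod_eq_of_lt (by omega) h2
        · have h3 : (i + c) % N = (i + c - N) % N := by
            conv_lhs => rw [show i + c = (i + c - N) + N * 1 by ring]
            rw [Int.add_mul_emod_self_left]
          rw [h3]
          exact Int.emod_eq_of_lt (by omega) (by omega)
      simp only [Finset.mem_Icc, hmodval]
      split_ifs <;> omega
    rw [Finset.sum_congr rfl step1, Finset.sum_ite_mem]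
    have hinter : Finset.Icc (0 : ℤ) (e - 2) ∩
        Finset.Icc (if c ≤ f - 2 then (0 : ℤ) else N - c)
          (if c ≤ f - 2 then f - 2 - c else N + f - 2 - c) =
        Finset.Icc (max 0 (if c ≤ f - 2 then (0 : ℤ) else N - c))
          (min (e - 2) (if c ≤ f - 2 then f - 2 - c else N + f - 2 - c)) := by
      ext x; simp only [Finset.mem_inter, Finset.mem_Icc]; omega
    rw [hinter, Finset.sum_const, Int.card_Icc]
    simp [nsmul_eq_mul]
  rw [hfirst, hsum]
  have hg1 : 1 ≤ (Int.gcd e f : ℤ) := by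
    have : Int.gcd e f ≠ 0 := by
      simp only [ne_eq, Int.gcd_eq_zero_iff]
      omega
    exact_mod_cast Nat.one_le_iff_ne_zero.mpr this
  rcases le_total e f with hef | hef
  · rw [min_eq_left hef, max_eq_right hef]
    rw [min_eq_left hef] at hqd
    have hd : N ∣ (c - q + e) := by
      have hq' : N ∣ (e * (1 - k) - q) := by
        have := dvd_neg.mpr hqd; rwa [neg_sub] at this
      have hkN : N ∣ (k * N) := Dvd.intro k (mul_comm N k)
      have key : c - q + e = (c - k * f) + (e * (1 - k) - q) + k * N := by
        rw [hNdef]; ring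
      rw [key]
      exact dvd_add (dvd_add hcd hq') hkN
    have hrel := dvd_cases N (c - q + e) hN (by omega) (by omega) hd
    split_ifs <;> omega
  · rw [min_eq_right hef, max_eq_left hef]
    rw [min_eq_right hef] at hqd
    have hd : N ∣ (q + c - f) := by
      have key : q + c - f = (q - f * (1 - k)) + (c - k * f) := by ring
      rw [key]
      exact dvd_add hqd hcd
    have hrel := dvd_cases N (q + c - f) hN (by omega) (by omega) hd
    split_ifs <;> omega
end

section
/- Let a, b ≥ 2 be integers, let k ≤ 0 be an integer, and set g = gcd(a-1, b). Then D_chain(a, b, k) = g · (D_F((a-1)/g, b/g, k) + 1). -/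
/-- `D_F(e,f,k)`: the rank of `SH^{2k}` of the Milnor fiber of the Fermat-type
singularity `x₁²+x₂²+x₃^e+x₄^f`, where `q` is the unique integer with
`0 ≤ q < e+f` and `min(e,f)·(1-k) ≡ q (mod e+f)`. -/
def DFermat (e f k : ℤ) : ℤ :=
  let q := (min e f * (1 - k)) % (e + f)
  if q = 0 then (Int.gcd e f : ℤ) - 1
  else if q ≤ min e f then q - 1
  else if q ≤ max e f then min e f - 1
  else e + f - q - 1

/-- `D_chain(a,b,k)`: the rank of `SH^{2k}` of the Milnor fiber of the dual of the
chain-type polynomial `x₁²+x₂²+x₃^a x₄+x₄^b`, where `q` is the unique integer with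
`0 ≤ q < a-1+b` and `(a-1)(1-k) ≡ q (mod a-1+b)`. -/
def Dchain (a b k : ℤ) : ℤ :=
  let q := ((a - 1) * (1 - k)) % (a - 1 + b)
  if q = 0 then (Int.gcd (a - 1) b : ℤ)
  else if q ≤ min (a - 1) b then q
  else if q ≤ max (a - 1) b then min (a - 1) b
  else (a - 1 + b) - q

/-!
Both ranks are values of one trapezoid function: for `N = m + n > 0` and `q = r mod N`,
`trapezoid m n r` rises with slope one on `(0, min m n]`, stays at `min m n` up to `max m n`
and falls back to `0` at `N` (with the value `gcd m n` at `q = 0`). It is homogeneous,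
`trapezoid (g m) (g n) (g r) = g · trapezoid m n r` for `g > 0`, and invariant under
`r ↦ -r`, since `q ↦ N - q` reflects the trapezoid. As `m s ≡ -n s (mod m + n)`, the
argument `(a-1)(1-k)` of `D_chain` may be replaced by `min(a-1, b)(1-k)`, and scaling out
`g = gcd(a-1, b)` leaves `D_F + 1`.
-/

def trapezoid (m n r : ℤ) : ℤ :=
  let q := r % (m + n)
  if q = 0 then (Int.gcd m n : ℤ)
  else if q ≤ min m n then q
  else if q ≤ max m n then min m n
  else m + n - q

namespace trapezoid

theorem congr_right {m n r s : ℤ} (h : r ≡ s [ZMOD m + n]) :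
    trapezoid m n r = trapezoid m n s := by
  simp only [trapezoid, h.eq]

theorem mul_left {g : ℤ} (hg : 0 < g) (m n r : ℤ) :
    trapezoid (g * m) (g * n) (g * r) = g * trapezoid m n r := by
  simp only [trapezoid, ← mul_add, Int.mul_emod_mul_of_pos _ _ hg, Int.gcd_mul_left,
    ← mul_min_of_nonneg _ _ hg.le, ← mul_max_of_nonneg _ _ hg.le,
    mul_eq_zero, hg.ne', false_or, mul_le_mul_iff_right₀ hg]
  push_cast [abs_of_pos hg]
  split_ifs <;> ring

theorem neg {m n : ℤ} (hmn : 0 < m + n) (r : ℤ) : trapezoid m n (-r) = trapezoid m n r := by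
  have hq := Int.emod_nonneg r hmn.ne'
  have hqN := Int.emod_lt_of_pos r hmn
  have hneg : -r % (m + n) = if r % (m + n) = 0 then 0 else m + n - r % (m + n) := by
    simp only [Int.neg_emod, Int.natAbs_of_nonneg hmn.le, Int.dvd_iff_emod_eq_zero]
  simp only [trapezoid, hneg]
  have hle := min_le_max (a := m) (b := n)
  have hsum := min_add_max m n
  split_ifs <;> omega

theorem left_mul_eq_right_mul {m n : ℤ} (hmn : 0 < m + n) (s : ℤ) :
    trapezoid m n (m * s) = trapezoid m n (n * s) := by
  rw [← neg hmn (n * s)]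
  exact congr_right (Int.modEq_iff_dvd.mpr ⟨-s, by ring⟩)

theorem left_mul_eq_min_mul {m n : ℤ} (hmn : 0 < m + n) (s : ℤ) :
    trapezoid m n (m * s) = trapezoid m n (min m n * s) := by
  rcases min_choice m n with h | h <;> rw [h]
  exact left_mul_eq_right_mul hmn s

end trapezoid

theorem Dchain_eq_trapezoid (a b k : ℤ) :
    Dchain a b k = trapezoid (a - 1) b ((a - 1) * (1 - k)) := rfl

theorem DFermat_add_one (e f k : ℤ) : DFermat e f k + 1 = trapezoid e f (min e f * (1 - k)) := by
  simp only [DFermat, trapezoid]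
  split_ifs <;> ring

theorem Dchain_eq_gcd_mul_DFermat_general (a b k : ℤ) (ha : 2 ≤ a) (hb : 2 ≤ b) :
    Dchain a b k =
      (Int.gcd (a - 1) b : ℤ) *
        (DFermat ((a - 1) / (Int.gcd (a - 1) b : ℤ)) (b / (Int.gcd (a - 1) b : ℤ)) k + 1) := by
  set g : ℤ := (Int.gcd (a - 1) b : ℤ)
  have hg : 0 < g :=
    Nat.cast_pos.mpr <| Int.gcd_pos_of_ne_zero_right (a - 1) (show b ≠ 0 by omega)
  obtain ⟨e, he⟩ : g ∣ a - 1 := Int.gcd_dvd_left _ _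
  obtain ⟨f, hf⟩ : g ∣ b := Int.gcd_dvd_right _ _
  have hef : 0 < e + f := pos_of_mul_pos_right (by rw [mul_add, ← he, ← hf]; omega) hg.le
  rw [Dchain_eq_trapezoid, DFermat_add_one, he, hf, Int.mul_ediv_cancel_left _ hg.ne',
    Int.mul_ediv_cancel_left _ hg.ne', mul_assoc, trapezoid.mul_left hg,
    trapezoid.left_mul_eq_min_mul hef]

/-- Proposition 4.17 (i): `D_chain(a,b,k) = g·(D_F((a-1)/g, b/g, k) + 1)` where
`g = gcd(a-1,b)`. -/
theorem Dchain_eq_gcd_mul_DFermat (a b k : ℤ) (ha : 2 ≤ a) (hb : 2 ≤ b) (hk : k ≤ 0) :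
    Dchain a b k =
      (Int.gcd (a - 1) b : ℤ) *
        (DFermat ((a - 1) / (Int.gcd (a - 1) b : ℤ)) (b / (Int.gcd (a - 1) b : ℤ)) k + 1) :=
  Dchain_eq_gcd_mul_DFermat_general a b k ha hb
end

section
/- Let c, d ≥ 2 be integers, let k ≤ 0 be an integer, and set g = gcd(c-1, d-1). Then D_loop(c, d, k) - 1 = g · (D_F((c-1)/g, (d-1)/g, k) + 1). -/
/-- `D_loop(c,d,k)`: the rank of `SH^{2k}` of the Milnor fiber of the loop-type
singularity `x₁²+x₂²+x₃^c x₄+x₃ x₄^d`, where `q` is the unique integer with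
`0 ≤ q < c+d-2` and `min(c-1,d-1)·(1-k) ≡ q (mod c+d-2)`. -/
def Dloop (c d k : ℤ) : ℤ :=
  let q := (min (c - 1) (d - 1) * (1 - k)) % (c + d - 2)
  if q = 0 then (Int.gcd (c - 1) (d - 1) : ℤ) + 1
  else if q ≤ min c d - 1 then q + 1
  else if q ≤ max c d - 1 then min c d
  else (c + d - 2) - q + 1

theorem Dloop_mul_add_one {g : ℤ} (hg : 0 < g) (e f k : ℤ) :
    Dloop (g * e + 1) (g * f + 1) k = g * (DFermat e f k + 1) + 1 := by
  have hmin : min (g * e + 1) (g * f + 1) = g * min e f + 1 := by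
    rw [min_add_add_right, mul_min_of_nonneg _ _ hg.le]
  have hmax : max (g * e + 1) (g * f + 1) = g * max e f + 1 := by
    rw [max_add_add_right, mul_max_of_nonneg _ _ hg.le]
  have hsum : g * e + 1 + (g * f + 1) - 2 = g * (e + f) := by ring
  have hgcd : (Int.gcd (g * e) (g * f) : ℤ) = g * Int.gcd e f := by
    rw [Int.gcd_mul_left, Nat.cast_mul, Int.natCast_natAbs, abs_of_pos hg]
  simp only [Dloop, DFermat, add_sub_cancel_right, ← mul_min_of_nonneg _ _ hg.le, hsum, hmin,
    hmax, hgcd, mul_assoc, Int.mul_emod_mul_of_pos _ _ hg, mul_eq_zero, hg.ne', false_or,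
    mul_le_mul_iff_right₀ hg]
  split_ifs <;> ring

theorem Dloop_sub_one_eq_gcd_mul_DFermat_general (c d k : ℤ) :
    Dloop c d k - 1 =
      (Int.gcd (c - 1) (d - 1) : ℤ) *
        (DFermat ((c - 1) / (Int.gcd (c - 1) (d - 1) : ℤ))
          ((d - 1) / (Int.gcd (c - 1) (d - 1) : ℤ)) k + 1) := by
  obtain hg | hg := eq_or_lt_of_le (Int.natCast_nonneg (Int.gcd (c - 1) (d - 1)))
  · obtain ⟨hc, hd⟩ := Int.gcd_eq_zero_iff.mp (by exact_mod_cast hg.symm)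
    obtain rfl : c = 1 := by omega
    obtain rfl : d = 1 := by omega
    simp [Dloop]
  have key := Dloop_mul_add_one hg ((c - 1) / (Int.gcd (c - 1) (d - 1) : ℤ))
    ((d - 1) / (Int.gcd (c - 1) (d - 1) : ℤ)) k
  rw [Int.mul_ediv_cancel' (Int.gcd_dvd_left _ _), Int.mul_ediv_cancel' (Int.gcd_dvd_right _ _),
    sub_add_cancel, sub_add_cancel] at key
  rw [key, add_sub_cancel_right]

/-- Proposition 4.17 (ii): `D_loop(c,d,k) - 1 = g·(D_F((c-1)/g, (d-1)/g, k) + 1)`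
where `g = gcd(c-1,d-1)`. -/
theorem Dloop_sub_one_eq_gcd_mul_DFermat (c d k : ℤ) (hc : 2 ≤ c) (hd : 2 ≤ d) (hk : k ≤ 0) :
    Dloop c d k - 1 =
      (Int.gcd (c - 1) (d - 1) : ℤ) *
        (DFermat ((c - 1) / (Int.gcd (c - 1) (d - 1) : ℤ))
          ((d - 1) / (Int.gcd (c - 1) (d - 1) : ℤ)) k + 1) :=
  Dloop_sub_one_eq_gcd_mul_DFermat_general c d k
end

section
/- Let e, f ≥ 2 be integers, let k ≤ 0 be an integer, and set g = gcd(e, f). Then D_F(e, f, k) + 1 = g · (D_F(e/g, f/g, k) + 1). -/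
/-! Scaling `e` and `f` by `g > 0` scales `q`, `min e f`, `max e f`, `e + f` and `gcd e f` by `g`,
so every case of `D_F + 1` is homogeneous of degree one in `g` and the case split is unchanged. -/

theorem DFermat_mul_mul_add_one (k : ℤ) {g : ℤ} (hg : 0 < g) (e f : ℤ) :
    DFermat (g * e) (g * f) k + 1 = g * (DFermat e f k + 1) := by
  have hmin : min (g * e) (g * f) = g * min e f := (mul_min_of_nonneg e f hg.le).symm
  have hmax : max (g * e) (g * f) = g * max e f := (mul_max_of_nonneg e f hg.le).symm
  have hq : min (g * e) (g * f) * (1 - k) % (g * e + g * f) =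
      g * (min e f * (1 - k) % (e + f)) := by
    rw [hmin, ← mul_add, mul_assoc, Int.mul_emod_mul_of_pos _ _ hg]
  have hgcd : (Int.gcd (g * e) (g * f) : ℤ) = g * Int.gcd e f := by
    rw [Int.gcd_mul_left, Nat.cast_mul, Int.natCast_natAbs, abs_of_pos hg]
  simp only [DFermat]
  rw [hq, hmin, hmax, hgcd]
  simp only [mul_eq_zero, hg.ne', false_or, mul_le_mul_iff_right₀ hg]
  split_ifs <;> ring

theorem DFermat_add_one_eq_gcd_mul_DFermat_general (e f k : ℤ) (he : 2 ≤ e) :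
    DFermat e f k + 1 =
      (Int.gcd e f : ℤ) *
        (DFermat (e / (Int.gcd e f : ℤ)) (f / (Int.gcd e f : ℤ)) k + 1) := by
  have hg : 0 < (Int.gcd e f : ℤ) := by
    exact_mod_cast Int.gcd_pos_of_ne_zero_left f (by omega)
  have h := DFermat_mul_mul_add_one k hg (e / Int.gcd e f) (f / Int.gcd e f)
  rwa [Int.mul_ediv_cancel' (Int.gcd_dvd_left e f),
    Int.mul_ediv_cancel' (Int.gcd_dvd_right e f)] at h

/-- Proposition 4.17 (iii): `D_F(e,f,k) + 1 = g·(D_F(e/g, f/g, k) + 1)` where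
`g = gcd(e,f)`. -/
theorem DFermat_add_one_eq_gcd_mul_DFermat (e f k : ℤ) (he : 2 ≤ e) (hf : 2 ≤ f) (hk : k ≤ 0) :
    DFermat e f k + 1 =
      (Int.gcd e f : ℤ) *
        (DFermat (e / (Int.gcd e f : ℤ)) (f / (Int.gcd e f : ℤ)) k + 1) :=
  DFermat_add_one_eq_gcd_mul_DFermat_general e f k he
end

section
/- Let c, d ≥ 2 be integers, let k ≤ 0 be an integer, and let q be the unique integer with 0 ≤ q < c+d-2 and (c-1)(1-k) ≡ q (mod c+d-2). Then: (i) |X̃_k| = 1 + ⌊((c-1) - q)/(c+d-2)⌋; (ii) |W̃_k| = ⌊(q - c)/(c+d-2)⌋ - ⌈(q - (d-1))/(c+d-2)⌉ + 2; (iii) for every integer j with 1 ≤ j ≤ d-1, |Z̃_{j,k}| = ⌊(q - 1 - j)/(c+d-2)⌋ - ⌈(q - (c-2) - j)/(c+d-2)⌉ + 1. In particular, |X̃_k| + |W̃_k| ≥ 1. -/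
lemma floorQ (x N : ℤ) (hN : 0 < N) : ⌊(x:ℚ)/(N:ℚ)⌋ = x / N := by
  have h : ((N.toNat : ℕ) : ℤ) = N := Int.toNat_of_nonneg hN.le
  rw [← h]
  push_cast
  exact Rat.floor_intCast_div_natCast x N.toNat

lemma ceilQ (x N : ℤ) (hN : 0 < N) : ⌈(x:ℚ)/(N:ℚ)⌉ = -((-x) / N) := by
  have h : ((x:ℚ)/(N:ℚ)) = -((((-x) : ℤ):ℚ)/(N:ℚ)) := by push_cast; ring
  rw [h, Int.ceil_neg, floorQ (-x) N hN]

lemma ediv_ge_neg_one {N x : ℤ} (hN : 0 < N) (h : -N ≤ x) : -1 ≤ x / N := by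
  have h2 := Int.ediv_le_ediv hN h
  rwa [Int.neg_ediv_of_dvd dvd_rfl, Int.ediv_self hN.ne'] at h2

lemma ncard_interval (N a L U : ℤ) (hN : 0 < N)
    (hnn : 0 ≤ (U - a)/N + 1 + (a - L)/N) :
    ({m : ℤ | L ≤ N*m + a ∧ N*m + a ≤ U}.ncard : ℤ) = (U - a)/N + 1 + (a - L)/N := by
  have hset : {m : ℤ | L ≤ N*m + a ∧ N*m + a ≤ U}
      = ↑(Finset.Icc (-((a - L)/N)) ((U - a)/N)) := by
    ext m
    simp only [Set.mem_setOf_eq, Finset.coe_Icc, Set.mem_Icc, neg_le]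
    rw [Int.le_ediv_iff_mul_le hN, Int.le_ediv_iff_mul_le hN]
    constructor
    · rintro ⟨hA, hB⟩; constructor <;> linarith
    · rintro ⟨hA, hB⟩; constructor <;> linarith
  rw [hset, Set.ncard_coe_finset, Int.card_Icc]
  rw [Int.toNat_of_nonneg (by omega)]
  ring

/-- Proposition B.1: explicit cardinalities of the sets `X̃_k`, `W̃_k`, `Z̃_{j,k}`
for a loop-type polynomial, in terms of floors and ceilings; in particular
`|X̃_k| + |W̃_k| ≥ 1`. -/
theorem loop_sets_card_formulas (c d k q : ℤ) (hc : 2 ≤ c) (hd : 2 ≤ d) (hk : k ≤ 0)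
    (hq0 : 0 ≤ q) (hq1 : q < c + d - 2)
    (hq : (c - 1) * (1 - k) ≡ q [ZMOD (c + d - 2)]) :
    (({m : ℤ | 0 ≤ m ∧ 0 ≤ (c + d - 2) * m + (c - 1) * k ∧
          (c + d - 2) * m + (c - 1) * k ≤ c - 1}.ncard : ℤ) =
        1 + ⌊(((c : ℚ) - 1) - (q : ℚ)) / ((c : ℚ) + (d : ℚ) - 2)⌋) ∧
    (({m : ℤ | m ≤ -k ∧ 1 ≤ -(c + d - 2) * m - (c - 1) * k ∧
          -(c + d - 2) * m - (c - 1) * k ≤ 2 * (d - 1)}.ncard : ℤ) =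
        ⌊((q : ℚ) - (c : ℚ)) / ((c : ℚ) + (d : ℚ) - 2)⌋ -
          ⌈((q : ℚ) - ((d : ℚ) - 1)) / ((c : ℚ) + (d : ℚ) - 2)⌉ + 2) ∧
    (∀ j : ℤ, 1 ≤ j → j ≤ d - 1 →
      ({m : ℤ | 1 ≤ (c + d - 2) * m + j + (c - 1) * k ∧
          (c + d - 2) * m + j + (c - 1) * k ≤ c - 2}.ncard : ℤ) =
        ⌊((q : ℚ) - 1 - (j : ℚ)) / ((c : ℚ) + (d : ℚ) - 2)⌋ -
          ⌈((q : ℚ) - ((c : ℚ) - 2) - (j : ℚ)) / ((c : ℚ) + (d : ℚ) - 2)⌉ + 1) ∧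
    1 ≤ {m : ℤ | 0 ≤ m ∧ 0 ≤ (c + d - 2) * m + (c - 1) * k ∧
          (c + d - 2) * m + (c - 1) * k ≤ c - 1}.ncard +
        {m : ℤ | m ≤ -k ∧ 1 ≤ -(c + d - 2) * m - (c - 1) * k ∧
          -(c + d - 2) * m - (c - 1) * k ≤ 2 * (d - 1)}.ncard := by
  have hNpos : (0:ℤ) < c + d - 2 := by omega
  obtain ⟨t, ht⟩ := hq.dvd
  -- ht : q - (c - 1) * (1 - k) = (c + d - 2) * t
  have hden : (c : ℚ) + (d : ℚ) - 2 = ((c + d - 2 : ℤ) : ℚ) := by push_cast; ring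
  -- X part
  have hXset : {m : ℤ | 0 ≤ m ∧ 0 ≤ (c + d - 2) * m + (c - 1) * k ∧
          (c + d - 2) * m + (c - 1) * k ≤ c - 1}
      = {m : ℤ | (0:ℤ) ≤ (c + d - 2) * m + (c - 1) * k ∧
          (c + d - 2) * m + (c - 1) * k ≤ c - 1} := by
    ext m
    simp only [Set.mem_setOf_eq]
    constructor
    · rintro ⟨_, h2, h3⟩; exact ⟨h2, h3⟩
    · rintro ⟨h2, h3⟩
      have hck : (c - 1) * k ≤ 0 := mul_nonpos_of_nonneg_of_nonpos (by omega) hk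
      have h' : (c + d - 2) * 0 ≤ (c + d - 2) * m := by rw [mul_zero]; linarith
      exact ⟨le_of_mul_le_mul_left h' hNpos, h2, h3⟩
  have e1 : c - 1 - (c - 1) * k = q + (c + d - 2) * (-t) := by linear_combination -ht
  have e2 : (c - 1) * k - 0 = (c - 1 - q) + (c + d - 2) * t := by linear_combination ht
  have hXnn : 0 ≤ (c - 1 - (c - 1) * k) / (c + d - 2) + 1 + ((c - 1) * k - 0) / (c + d - 2) := by
    rw [e1, e2, Int.add_mul_ediv_left q (-t) hNpos.ne',
      Int.add_mul_ediv_left (c - 1 - q) t hNpos.ne',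
      Int.ediv_eq_zero_of_lt hq0 hq1]
    have := ediv_ge_neg_one hNpos (show -(c + d - 2) ≤ c - 1 - q by omega)
    linarith
  have hXcard : ({m : ℤ | 0 ≤ m ∧ 0 ≤ (c + d - 2) * m + (c - 1) * k ∧
          (c + d - 2) * m + (c - 1) * k ≤ c - 1}.ncard : ℤ)
      = 1 + (c - 1 - q) / (c + d - 2) := by
    rw [hXset, ncard_interval (c + d - 2) ((c - 1) * k) 0 (c - 1) hNpos hXnn,
      e1, e2, Int.add_mul_ediv_left q (-t) hNpos.ne',
      Int.add_mul_ediv_left (c - 1 - q) t hNpos.ne',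
      Int.ediv_eq_zero_of_lt hq0 hq1]
    ring
  -- W part
  have hWset : {m : ℤ | m ≤ -k ∧ 1 ≤ -(c + d - 2) * m - (c - 1) * k ∧
          -(c + d - 2) * m - (c - 1) * k ≤ 2 * (d - 1)}
      = {m : ℤ | (2 - 2*d) ≤ (c + d - 2) * m + (c - 1) * k ∧
          (c + d - 2) * m + (c - 1) * k ≤ -1} := by
    ext m
    simp only [Set.mem_setOf_eq]
    constructor
    · rintro ⟨_, h2, h3⟩; constructor <;> linarith
    · rintro ⟨h2, h3⟩
      have hdk : (d - 1) * k ≤ 0 := mul_nonpos_of_nonneg_of_nonpos (by omega) hk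
      have h' : (c + d - 2) * m ≤ (c + d - 2) * (-k) := by linarith
      exact ⟨le_of_mul_le_mul_left h' hNpos, by linarith, by linarith⟩
  have e3 : (-1 : ℤ) - (c - 1) * k = (q - c) + (c + d - 2) * (-t) := by linear_combination -ht
  have e4 : (c - 1) * k - (2 - 2*d) = (d - 1 - q) + (c + d - 2) * (1 + t) := by
    linear_combination ht
  have hWb1 := ediv_ge_neg_one hNpos (show -(c + d - 2) ≤ q - c by omega)
  have hWb2 := ediv_ge_neg_one hNpos (show -(c + d - 2) ≤ d - 1 - q by omega)
  have hWnn : 0 ≤ ((-1 : ℤ) - (c - 1) * k) / (c + d - 2) + 1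
      + ((c - 1) * k - (2 - 2*d)) / (c + d - 2) := by
    rw [e3, e4, Int.add_mul_ediv_left (q - c) (-t) hNpos.ne',
      Int.add_mul_ediv_left (d - 1 - q) (1 + t) hNpos.ne']
    linarith
  have hWcard : ({m : ℤ | m ≤ -k ∧ 1 ≤ -(c + d - 2) * m - (c - 1) * k ∧
          -(c + d - 2) * m - (c - 1) * k ≤ 2 * (d - 1)}.ncard : ℤ)
      = (q - c) / (c + d - 2) + (d - 1 - q) / (c + d - 2) + 2 := by
    rw [hWset, ncard_interval (c + d - 2) ((c - 1) * k) (2 - 2*d) (-1) hNpos hWnn,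
      e3, e4, Int.add_mul_ediv_left (q - c) (-t) hNpos.ne',
      Int.add_mul_ediv_left (d - 1 - q) (1 + t) hNpos.ne']
    ring
  refine ⟨?_, ?_, ?_, ?_⟩
  · rw [hXcard, show ((c : ℚ) - 1) - (q : ℚ) = ((c - 1 - q : ℤ) : ℚ) by push_cast; ring,
      hden, floorQ _ _ hNpos]
  · rw [hWcard, show ((q : ℚ) - (c : ℚ)) = ((q - c : ℤ) : ℚ) by push_cast; ring,
      show ((q : ℚ) - ((d : ℚ) - 1)) = ((q - d + 1 : ℤ) : ℚ) by push_cast; ring,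
      hden, floorQ _ _ hNpos, ceilQ _ _ hNpos,
      show -(q - d + 1) = d - 1 - q by ring]
    ring
  · intro j hj1 hj2
    have hZset : {m : ℤ | 1 ≤ (c + d - 2) * m + j + (c - 1) * k ∧
          (c + d - 2) * m + j + (c - 1) * k ≤ c - 2}
        = {m : ℤ | (1:ℤ) ≤ (c + d - 2) * m + (j + (c - 1) * k) ∧
          (c + d - 2) * m + (j + (c - 1) * k) ≤ c - 2} := by
      ext m; simp only [Set.mem_setOf_eq, add_assoc]
    have e5 : c - 2 - (j + (c - 1) * k) = (q - 1 - j) + (c + d - 2) * (-t) := by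
      linear_combination -ht
    have e6 : (j + (c - 1) * k) - 1 = (c - 2 + j - q) + (c + d - 2) * t := by
      linear_combination ht
    have hZb1 := ediv_ge_neg_one hNpos (show -(c + d - 2) ≤ q - 1 - j by omega)
    have hZb2 := ediv_ge_neg_one hNpos (show -(c + d - 2) ≤ c - 2 + j - q by omega)
    have hZnn : 0 ≤ (c - 2 - (j + (c - 1) * k)) / (c + d - 2) + 1
        + ((j + (c - 1) * k) - 1) / (c + d - 2) := by
      rw [e5, e6, Int.add_mul_ediv_left (q - 1 - j) (-t) hNpos.ne',
        Int.add_mul_ediv_left (c - 2 + j - q) t hNpos.ne']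
      rcases le_or_gt 0 (q - 1 - j) with h | h
      · have := Int.ediv_nonneg h hNpos.le
        linarith
      · have := Int.ediv_nonneg (show (0:ℤ) ≤ c - 2 + j - q by omega) hNpos.le
        linarith
    rw [hZset, ncard_interval (c + d - 2) (j + (c - 1) * k) 1 (c - 2) hNpos hZnn,
      e5, e6, Int.add_mul_ediv_left (q - 1 - j) (-t) hNpos.ne',
      Int.add_mul_ediv_left (c - 2 + j - q) t hNpos.ne',
      show ((q : ℚ) - 1 - (j : ℚ)) = ((q - 1 - j : ℤ) : ℚ) by push_cast; ring,
      show ((q : ℚ) - ((c : ℚ) - 2) - (j : ℚ)) = ((q - c + 2 - j : ℤ) : ℚ) by push_cast; ring,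
      hden, floorQ _ _ hNpos, ceilQ _ _ hNpos,
      show -(q - c + 2 - j) = c - 2 + j - q by ring]
    ring
  · rcases le_or_gt q (c - 1) with h | h
    · have h0 : (c - 1 - q) / (c + d - 2) = 0 :=
        Int.ediv_eq_zero_of_lt (by omega) (by omega)
      rw [h0] at hXcard
      omega
    · have h0 : (q - c) / (c + d - 2) = 0 :=
        Int.ediv_eq_zero_of_lt (by omega) (by omega)
      have h1 : (1:ℤ) ≤ ({m : ℤ | m ≤ -k ∧ 1 ≤ -(c + d - 2) * m - (c - 1) * k ∧
          -(c + d - 2) * m - (c - 1) * k ≤ 2 * (d - 1)}.ncard : ℤ) := by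
        rw [hWcard, h0]
        linarith [hWb2]
      have h2 : 1 ≤ {m : ℤ | m ≤ -k ∧ 1 ≤ -(c + d - 2) * m - (c - 1) * k ∧
          -(c + d - 2) * m - (c - 1) * k ≤ 2 * (d - 1)}.ncard := by exact_mod_cast h1
      omega
end

section
/- Let a, b ≥ 2 be integers and let f = X₁² + X₂² + X₃^a + X₃·X₄^b in the polynomial ring ℂ[X₁, X₂, X₃, X₄]. Then the quotient ring ℂ[X₁, X₂, X₃, X₄]/⟨∂f/∂X₁, ∂f/∂X₂, ∂f/∂X₃, ∂f/∂X₄⟩ is a finite-dimensional ℂ-vector space of dimension a(b-1) + 1. -/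
open MvPolynomial

/-- The Jacobian ideal of a polynomial in four variables: the ideal generated by
its four partial derivatives. -/
noncomputable def jacobianIdeal (f : MvPolynomial (Fin 4) ℂ) : Ideal (MvPolynomial (Fin 4) ℂ) :=
  Ideal.span {pderiv 0 f, pderiv 1 f, pderiv 2 f, pderiv 3 f}

/-!
Write `x = X 2`, `y = X 3`. Up to units the Jacobian ideal is `(X 0, X 1, a x^(a-1) + y^b,
x y^(b-1))`, so the quotient is spanned by the `a (b-1) + 1` monomials `x^i y^j` (`i < a`,
`j < b - 1`) and `y^(b-1)`: the relations kill `x y^(b-1)` and `x^a`, and trade `y^b` for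
`-a x^(a-1)`.
These monomials are independent because the quotient is Gorenstein with socle `x^(a-1) y^(b-2)`:
the functional "coefficient of `x^(a-1) y^(b-2)` minus `a` times coefficient of `y^(2b-2)`"
vanishes on the ideal, and it pairs the basis diagonally with `x^(a-1-i) y^(b-2-j)` and `y^(b-1)`.
-/

theorem map_eq_zero_of_mem_ideal_span {A M F : Type*} [CommSemiring A] [AddCommMonoid M]
    [FunLike F A M] [AddMonoidHomClass F A M] (L : F) {s : Set A}
    (hs : ∀ q, ∀ g ∈ s, L (q * g) = 0) {p : A} (hp : p ∈ Ideal.span s) : L p = 0 := by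
  obtain ⟨n, q, g, rfl⟩ := Submodule.mem_span_set'.mp hp
  simp [map_sum, hs]

section Quotient

variable {K A : Type*} [Field K] [CommRing A] [Algebra K A]

theorem linearIndependent_mk_of_pairing {ι : Type*} [Fintype ι] {I : Ideal A} (L : A →ₗ[K] K)
    (hL : ∀ p ∈ I, L p = 0) (v w : ι → A) (hdiag : ∀ i, L (w i * v i) ≠ 0)
    (hoff : ∀ i j, i ≠ j → L (w i * v j) = 0) :
    LinearIndependent K (fun i => Ideal.Quotient.mkₐ K I (v i)) := by
  classical
  rw [Fintype.linearIndependent_iff]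
  intro c hc i
  have hmem : ∑ j, c j • v j ∈ I := by
    rw [← Ideal.Quotient.eq_zero_iff_mem, ← Ideal.Quotient.mkₐ_eq_mk K]
    simpa [map_sum] using hc
  have hpair := hL _ (I.mul_mem_left (w i) hmem)
  rw [Finset.mul_sum, map_sum, Finset.sum_eq_single i (fun j _ hji => by
    rw [mul_smul_comm, map_smul, hoff i j hji.symm, smul_zero]) (by simp)] at hpair
  rw [mul_smul_comm, map_smul, smul_eq_mul] at hpair
  exact (mul_eq_zero.mp hpair).resolve_right (hdiag i)

theorem span_eq_top_of_mk_X_mul_mem {σ ι : Type*} {I : Ideal (MvPolynomial σ K)}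
    (v : ι → MvPolynomial σ K ⧸ I) (h1 : 1 ∈ Submodule.span K (Set.range v))
    (hX : ∀ n i, Ideal.Quotient.mkₐ K I (X n) * v i ∈ Submodule.span K (Set.range v)) :
    Submodule.span K (Set.range v) = ⊤ := by
  set S := Submodule.span K (Set.range v)
  have hXS : ∀ n, ∀ u ∈ S, Ideal.Quotient.mkₐ K I (X n) * u ∈ S := fun n u hu => by
    induction hu using Submodule.span_induction with
    | mem u hu => obtain ⟨i, rfl⟩ := hu; exact hX n i
    | zero => simp
    | add u u' _ _ hu hu' => rw [mul_add]; exact S.add_mem hu hu'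
    | smul c u _ hu => rw [mul_smul_comm]; exact S.smul_mem c hu
  rw [eq_top_iff]
  rintro u -
  obtain ⟨p, rfl⟩ := Ideal.Quotient.mkₐ_surjective K I u
  induction p using MvPolynomial.induction_on with
  | C c =>
    rw [← algebraMap_eq, AlgHom.commutes, Algebra.algebraMap_eq_smul_one]
    exact S.smul_mem c h1
  | add p q hp hq => rw [map_add]; exact S.add_mem hp hq
  | mul_X p n hp => rw [map_mul, mul_comm]; exact hXS n _ hp

end Quotient

local notation "R₄" => MvPolynomial (Fin 4) ℂ

lemma MvPolynomial.isUnit_natCast {σ K : Type*} [Field K] [CharZero K] {n : ℕ} (hn : n ≠ 0) :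
    IsUnit (n : MvPolynomial σ K) := by
  simpa using (isUnit_iff_ne_zero.mpr (Nat.cast_ne_zero.mpr hn : (n : K) ≠ 0)).map
    (C : K →+* MvPolynomial σ K)

noncomputable def xyExp (i j : ℕ) : Fin 4 →₀ ℕ := Finsupp.single 2 i + Finsupp.single 3 j

@[simp] lemma xyExp_apply (i j : ℕ) (n : Fin 4) :
    xyExp i j n = if n = 2 then i else if n = 3 then j else 0 := by
  fin_cases n <;> simp [xyExp]

lemma xyExp_le_xyExp {i j k l : ℕ} : xyExp i j ≤ xyExp k l ↔ i ≤ k ∧ j ≤ l := by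
  refine ⟨fun h => ⟨by simpa using h 2, by simpa using h 3⟩, fun ⟨hik, hjl⟩ n => ?_⟩
  fin_cases n <;> simp [hik, hjl]

lemma xyExp_sub_xyExp (i j k l : ℕ) : xyExp k l - xyExp i j = xyExp (k - i) (l - j) := by
  ext n; fin_cases n <;> simp

lemma xyExp_inj {i j k l : ℕ} : xyExp i j = xyExp k l ↔ i = k ∧ j = l := by
  simp [Finsupp.ext_iff, Fin.forall_fin_succ]

noncomputable def xyMonomial (e : ℕ × ℕ) : R₄ := X 2 ^ e.1 * X 3 ^ e.2

lemma xyMonomial_eq_monomial (e : ℕ × ℕ) : xyMonomial e = monomial (xyExp e.1 e.2) 1 := by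
  rw [xyMonomial, X_pow_eq_monomial, X_pow_eq_monomial, monomial_mul, one_mul, xyExp]

lemma xyMonomial_mul (e f : ℕ × ℕ) : xyMonomial e * xyMonomial f = xyMonomial (e + f) := by
  simp only [xyMonomial, Prod.fst_add, Prod.snd_add, pow_add]; ring

section DualChain

variable (a b : ℕ)

noncomputable def dualChainIdeal : Ideal R₄ :=
  Ideal.span {X 0, X 1, (a : R₄) * X 2 ^ (a - 1) + X 3 ^ b, X 2 * X 3 ^ (b - 1)}

lemma jacobianIdeal_eq_dualChainIdeal (hb : b ≠ 0) :
    jacobianIdeal (X 0 ^ 2 + X 1 ^ 2 + X 2 ^ a + X 2 * X 3 ^ b) = dualChainIdeal a b := by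
  have h3 : pderiv (3 : Fin 4) (X 0 ^ 2 + X 1 ^ 2 + X 2 ^ a + X 2 * X 3 ^ b : R₄)
      = (b : R₄) * (X 2 * X 3 ^ (b - 1)) := by
    simp [mul_left_comm]
  have h2 : IsUnit (2 : R₄) := by exact_mod_cast isUnit_natCast two_ne_zero
  rw [jacobianIdeal, h3]
  simp [dualChainIdeal, Ideal.span_insert, Ideal.span_singleton_mul_left_unit,
    isUnit_natCast hb, h2]

noncomputable def socleFunctional : R₄ →ₗ[ℂ] ℂ :=
  lcoeff ℂ (xyExp (a - 1) (b - 2)) - (a : ℂ) • lcoeff ℂ (xyExp 0 (2 * b - 2))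

lemma socleFunctional_apply (p : R₄) :
    socleFunctional a b p = coeff (xyExp (a - 1) (b - 2)) p - a * coeff (xyExp 0 (2 * b - 2)) p :=
  rfl

lemma socleFunctional_xyMonomial (e : ℕ × ℕ) :
    socleFunctional a b (xyMonomial e) =
      (if e.1 = a - 1 ∧ e.2 = b - 2 then 1 else 0) -
        a * (if e.1 = 0 ∧ e.2 = 2 * b - 2 then 1 else 0) := by
  simp [socleFunctional_apply, xyMonomial_eq_monomial, coeff_monomial, xyExp_inj]

lemma socleFunctional_eq_zero_of_mem (ha : 2 ≤ a) (hb : 2 ≤ b) {p : R₄}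
    (hp : p ∈ dualChainIdeal a b) : socleFunctional a b p = 0 := by
  refine map_eq_zero_of_mem_ideal_span _ ?_ hp
  rintro q g (rfl | rfl | rfl | rfl)
  · simp [socleFunctional_apply, coeff_mul_X']
  · simp [socleFunctional_apply, coeff_mul_X']
  · have hg : ((a : R₄) * X 2 ^ (a - 1) + X 3 ^ b) =
        monomial (xyExp (a - 1) 0) (a : ℂ) + monomial (xyExp 0 b) 1 := by
      rw [← mul_one (a : ℂ), ← C_mul_monomial, ← xyMonomial_eq_monomial (a - 1, 0),
        ← xyMonomial_eq_monomial (0, b)]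
      simp [xyMonomial]
    rw [hg, mul_add, map_add]
    have ha1 : a - 1 ≠ 0 := by omega
    have hb1 : ¬b ≤ b - 2 := by omega
    have hb2 : b ≤ 2 * b - 2 := by omega
    have hb3 : 2 * b - 2 - b = b - 2 := by omega
    simp [socleFunctional_apply, coeff_mul_monomial', xyExp_le_xyExp, xyExp_sub_xyExp, ha1, hb1,
      hb2, hb3, mul_comm _ (a : ℂ)]
  · have hg : (X 2 * X 3 ^ (b - 1) : R₄) = monomial (xyExp 1 (b - 1)) 1 := by
      rw [← xyMonomial_eq_monomial (1, b - 1), xyMonomial, pow_one]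
    simp [hg, socleFunctional_apply, coeff_mul_monomial', xyExp_le_xyExp]
    omega

abbrev MonomialIndex := (Fin a × Fin (b - 1)) ⊕ Unit

def basisExp : MonomialIndex a b → ℕ × ℕ
  | .inl (i, j) => (i, j)
  | .inr _ => (0, b - 1)

def dualExp : MonomialIndex a b → ℕ × ℕ
  | .inl (i, j) => (a - 1 - i, b - 2 - j)
  | .inr _ => (0, b - 1)

lemma xyMonomial_mem_dualChainIdeal {i j : ℕ} (hi : 1 ≤ i) (hj : b - 1 ≤ j) :
    xyMonomial (i, j) ∈ dualChainIdeal a b := by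
  have hg : xyMonomial (1, b - 1) ∈ dualChainIdeal a b :=
    Ideal.subset_span (by simp [xyMonomial])
  rw [← Nat.sub_add_cancel hi, ← Nat.sub_add_cancel hj, ← Prod.mk_add_mk, ← xyMonomial_mul]
  exact Ideal.mul_mem_left _ _ hg

lemma mkₐ_eq_zero_of_mem {p : R₄} (hp : p ∈ dualChainIdeal a b) :
    Ideal.Quotient.mkₐ ℂ (dualChainIdeal a b) p = 0 :=
  Ideal.Quotient.eq_zero_iff_mem.mpr hp

lemma mk_xyMonomial_add_snd (e : ℕ × ℕ) :
    Ideal.Quotient.mkₐ ℂ (dualChainIdeal a b) (xyMonomial (e + (0, b))) =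
      -(a : ℂ) • Ideal.Quotient.mkₐ ℂ (dualChainIdeal a b) (xyMonomial (e + (a - 1, 0))) := by
  have hg : (a : ℂ) • xyMonomial (a - 1, 0) + xyMonomial (0, b) ∈ dualChainIdeal a b :=
    Ideal.subset_span (by simp [xyMonomial, Algebra.smul_def])
  have h := Ideal.Quotient.eq_zero_iff_mem.mpr (Ideal.mul_mem_left _ (xyMonomial e) hg)
  rw [← Ideal.Quotient.mkₐ_eq_mk ℂ, mul_add, mul_smul_comm, xyMonomial_mul, xyMonomial_mul,
    map_add, map_smul, add_eq_zero_iff_neg_eq] at h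
  rw [← h, neg_smul]

lemma mk_xyMonomial_eq_zero_of_le (ha : 1 ≤ a) {i j : ℕ} (hi : a ≤ i) :
    Ideal.Quotient.mkₐ ℂ (dualChainIdeal a b) (xyMonomial (i, j)) = 0 := by
  have h := mk_xyMonomial_add_snd a b (i - (a - 1), j)
  rw [Prod.mk_add_mk, Prod.mk_add_mk, Nat.sub_add_cancel (by omega), add_zero,
    mkₐ_eq_zero_of_mem a b (xyMonomial_mem_dualChainIdeal a b (by omega) (by omega))] at h
  simpa [Nat.one_le_iff_ne_zero.mp ha] using h.symm

noncomputable def quotientMonomial (k : MonomialIndex a b) : R₄ ⧸ dualChainIdeal a b :=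
  Ideal.Quotient.mkₐ ℂ (dualChainIdeal a b) (xyMonomial (basisExp a b k))

lemma linearIndependent_quotientMonomial (ha : 2 ≤ a) (hb : 2 ≤ b) :
    LinearIndependent ℂ (quotientMonomial a b) := by
  refine linearIndependent_mk_of_pairing (socleFunctional a b)
    (fun _ => socleFunctional_eq_zero_of_mem a b ha hb) _
    (fun k => xyMonomial (dualExp a b k)) ?_ ?_
  · rintro (⟨⟨i, hi⟩, ⟨j, hj⟩⟩ | -) <;>
      simp only [xyMonomial_mul, socleFunctional_xyMonomial, basisExp, dualExp, Prod.mk_add_mk] <;>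
      split_ifs <;> simp_all <;> omega
  · rintro (⟨⟨i, hi⟩, ⟨j, hj⟩⟩ | _) (⟨⟨i', hi'⟩, ⟨j', hj'⟩⟩ | _) hne <;>
      simp only [xyMonomial_mul, socleFunctional_xyMonomial, basisExp, dualExp, Prod.mk_add_mk] <;>
      simp only [ne_eq, Sum.inl.injEq, Prod.mk.injEq, Fin.mk.injEq, reduceCtorEq,
        not_true_eq_false, not_false_eq_true] at hne <;> split_ifs <;> simp <;> omega

lemma mk_xyMonomial_mem_span_of_one_le (ha : 1 ≤ a) {i : ℕ} (j : ℕ) (hi : 1 ≤ i) :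
    Ideal.Quotient.mkₐ ℂ (dualChainIdeal a b) (xyMonomial (i, j)) ∈
      Submodule.span ℂ (Set.range (quotientMonomial a b)) := by
  rcases lt_or_ge i a with hia | hai
  · rcases lt_or_ge j (b - 1) with hjb | hbj
    · exact Submodule.subset_span ⟨.inl (⟨i, hia⟩, ⟨j, hjb⟩), rfl⟩
    · rw [mkₐ_eq_zero_of_mem a b (xyMonomial_mem_dualChainIdeal a b hi hbj)]
      exact Submodule.zero_mem _
  · rw [mk_xyMonomial_eq_zero_of_le a b ha hai]
    exact Submodule.zero_mem _

lemma mk_xyMonomial_mem_span (ha : 2 ≤ a) (e : ℕ × ℕ) :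
    Ideal.Quotient.mkₐ ℂ (dualChainIdeal a b) (xyMonomial e) ∈
      Submodule.span ℂ (Set.range (quotientMonomial a b)) := by
  obtain ⟨i, j⟩ := e
  rcases Nat.eq_zero_or_pos i with rfl | hi
  · rcases lt_trichotomy j (b - 1) with hjb | rfl | hbj
    · exact Submodule.subset_span ⟨.inl (⟨0, by omega⟩, ⟨j, hjb⟩), rfl⟩
    · exact Submodule.subset_span ⟨.inr (), rfl⟩
    · have h := mk_xyMonomial_add_snd a b (0, j - b)
      rw [Prod.mk_add_mk, Prod.mk_add_mk, Nat.sub_add_cancel (by omega), zero_add, add_zero] at h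
      rw [h]
      exact Submodule.smul_mem _ _ (mk_xyMonomial_mem_span_of_one_le a b (by omega) _ (by omega))
  · exact mk_xyMonomial_mem_span_of_one_le a b (by omega) j hi

lemma span_quotientMonomial_eq_top (ha : 2 ≤ a) :
    Submodule.span ℂ (Set.range (quotientMonomial a b)) = ⊤ := by
  refine span_eq_top_of_mk_X_mul_mem _
    (by simpa [xyMonomial] using mk_xyMonomial_mem_span a b ha (0, 0)) ?_
  intro n k
  rw [quotientMonomial, ← map_mul]
  obtain rfl | rfl | rfl | rfl : n = 0 ∨ n = 1 ∨ n = 2 ∨ n = 3 := by fin_cases n <;> simp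
  · rw [mkₐ_eq_zero_of_mem a b (Ideal.mul_mem_right _ _ (Ideal.subset_span (by simp)))]
    exact Submodule.zero_mem _
  · rw [mkₐ_eq_zero_of_mem a b (Ideal.mul_mem_right _ _ (Ideal.subset_span (by simp)))]
    exact Submodule.zero_mem _
  · rw [show X 2 = xyMonomial (1, 0) by simp [xyMonomial], xyMonomial_mul]
    exact mk_xyMonomial_mem_span a b ha _
  · rw [show X 3 = xyMonomial (0, 1) by simp [xyMonomial], xyMonomial_mul]
    exact mk_xyMonomial_mem_span a b ha _

end DualChain

/-- The Milnor number of the dual chain-type singularity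
`x₁² + x₂² + x₃^a + x₃ x₄^b` is `a(b-1)+1`. -/
theorem milnor_number_dual_chain (a b : ℕ) (ha : 2 ≤ a) (hb : 2 ≤ b) :
    FiniteDimensional ℂ
      (MvPolynomial (Fin 4) ℂ ⧸
        jacobianIdeal (X 0 ^ 2 + X 1 ^ 2 + X 2 ^ a + X 2 * X 3 ^ b)) ∧
    Module.finrank ℂ
      (MvPolynomial (Fin 4) ℂ ⧸
        jacobianIdeal (X 0 ^ 2 + X 1 ^ 2 + X 2 ^ a + X 2 * X 3 ^ b)) = a * (b - 1) + 1 := by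
  rw [jacobianIdeal_eq_dualChainIdeal a b (by omega)]
  let B := Module.Basis.mk (linearIndependent_quotientMonomial a b ha hb)
    (span_quotientMonomial_eq_top a b ha).ge
  exact ⟨Module.Finite.of_basis B, by simp [Module.finrank_eq_card_basis B]⟩
end

section
/- Let c, d ≥ 2 be integers and let f = X₁² + X₂² + X₃^c·X₄ + X₃·X₄^d in the polynomial ring ℂ[X₁, X₂, X₃, X₄]. Then the quotient ring ℂ[X₁, X₂, X₃, X₄]/⟨∂f/∂X₁, ∂f/∂X₂, ∂f/∂X₃, ∂f/∂X₄⟩ is a finite-dimensional ℂ-vector space of dimension c·d. -/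
/-!
In the Milnor algebra `X₁ = X₂ = 0`, and `x = X₃`, `y = X₄` satisfy `c x^(c-1) y + y^d = 0`
and `x^c + d x y^(d-1) = 0`. Combining the two relations gives `(cd - 1) x^c y = 0`, and
symmetrically `(cd - 1) x y^d = 0`; since `cd ≠ 1`, the span of the `c·d` monomials `x^i y^j`
with `i < c`, `j < d` is stable under multiplication by `x` and `y`, hence is everything. These
monomials are linearly independent: the linear functional sending a monomial to the coordinates
of its reduction vanishes on the Jacobian ideal, which is checked on monomial multiples of the
four partial derivatives.
-/

open MvPolynomial

theorem eq_zero_of_natCast_mul_eq_zero {A : Type*} [CommRing A] [Algebra ℚ A] {n : ℕ}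
    (hn : n ≠ 0) {a : A} (h : (n : A) * a = 0) : a = 0 := by
  have hu : IsUnit (n : A) := by
    simpa using (IsUnit.mk0 (n : ℚ) (Nat.cast_ne_zero.2 hn)).map (algebraMap ℚ A)
  exact hu.mul_right_eq_zero.1 h

theorem MvPolynomial.map_eq_zero_of_mem_span_of_monomial_mul {σ R M : Type*}
    [CommSemiring R] [AddCommMonoid M] [Module R M] (φ : MvPolynomial σ R →ₗ[R] M)
    {S : Set (MvPolynomial σ R)}
    (hS : ∀ s ∈ S, ∀ m a, φ (monomial m a * s) = 0) {p : MvPolynomial σ R}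
    (hp : p ∈ Ideal.span S) : φ p = 0 := by
  have hmul : ∀ s ∈ S, ∀ q, φ (q * s) = 0 := fun s hs q => by
    induction q using MvPolynomial.induction_on' with
    | monomial m a => exact hS s hs m a
    | add q r hq hr => rw [add_mul, map_add, hq, hr, add_zero]
  suffices ∀ q, φ (q * p) = 0 by simpa using this 1
  induction hp using Submodule.span_induction with
  | mem s hs => exact hmul s hs
  | zero => simp
  | add x y _ _ hx hy => intro q; rw [mul_add, map_add, hx, hy, add_zero]
  | smul r x _ hx => intro q; rw [smul_eq_mul, ← mul_assoc, hx]

section LoopRelations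

variable {A : Type*} [CommRing A] {x y : A} {c d : ℕ}

theorem pow_mul_eq_zero_of_loop [Algebra ℚ A] (hc : 2 ≤ c) (hd : 2 ≤ d)
    (hx : (c : A) * x ^ (c - 1) * y + y ^ d = 0) (hy : x ^ c + d * x * y ^ (d - 1) = 0) :
    x ^ c * y = 0 := by
  have hmul : ((c * d - 1 : ℕ) : A) * (x ^ c * y) = 0 := by
    obtain ⟨c, rfl⟩ : ∃ c', c = c' + 1 := ⟨c - 1, by omega⟩
    obtain ⟨d, rfl⟩ : ∃ d', d = d' + 1 := ⟨d - 1, by omega⟩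
    rw [Nat.cast_sub (by nlinarith)]
    push_cast at hx hy ⊢
    linear_combination ((d : A) + 1) * x * hx - y * hy
  exact eq_zero_of_natCast_mul_eq_zero (by have := Nat.mul_le_mul hc hd; omega) hmul

theorem pow_mul_pow_eq_zero_of_loop [Algebra ℚ A] (hc : 2 ≤ c) (hd : 2 ≤ d)
    (hx : (c : A) * x ^ (c - 1) * y + y ^ d = 0) (hy : x ^ c + d * x * y ^ (d - 1) = 0)
    {k l : ℕ} (hk : c ≤ k) (hl : 1 ≤ l) : x ^ k * y ^ l = 0 := by
  obtain ⟨k, rfl⟩ := Nat.exists_eq_add_of_le hk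
  obtain ⟨l, rfl⟩ := Nat.exists_eq_add_of_le hl
  rw [show x ^ (c + k) * y ^ (1 + l) = (x ^ c * y) * (x ^ k * y ^ l) by ring,
    pow_mul_eq_zero_of_loop hc hd hx hy, zero_mul]

def loopMonomial (x y : A) (c d : ℕ) (p : Fin c × Fin d) : A :=
  x ^ (p.1 : ℕ) * y ^ (p.2 : ℕ)

theorem range_loopMonomial_swap (x y : A) (c d : ℕ) :
    Set.range (loopMonomial y x d c) = Set.range (loopMonomial x y c d) := by
  rw [← (Equiv.prodComm (Fin c) (Fin d)).surjective.range_comp]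
  congr 1
  ext p
  exact mul_comm _ _

variable (K : Type*) [CommRing K] [Algebra K A]

theorem pow_mul_pow_mem_span_loopMonomial {i j : ℕ} (hi : i < c) (hj : j < d) :
    x ^ i * y ^ j ∈ Submodule.span K (Set.range (loopMonomial x y c d)) :=
  Submodule.subset_span ⟨(⟨i, hi⟩, ⟨j, hj⟩), rfl⟩

variable [Algebra ℚ A] (hc : 2 ≤ c) (hd : 2 ≤ d)
  (hx : (c : A) * x ^ (c - 1) * y + y ^ d = 0) (hy : x ^ c + d * x * y ^ (d - 1) = 0)
include hc hd hx hy

theorem x_mul_loopMonomial_mem_span (p : Fin c × Fin d) :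
    x * loopMonomial x y c d p ∈ Submodule.span K (Set.range (loopMonomial x y c d)) := by
  obtain ⟨⟨i, hi⟩, ⟨j, hj⟩⟩ := p
  rw [loopMonomial, ← mul_assoc, ← pow_succ']
  by_cases hi' : i + 1 < c
  · exact pow_mul_pow_mem_span_loopMonomial K hi' hj
  obtain rfl : c = i + 1 := by omega
  rcases Nat.eq_zero_or_pos j with rfl | hj
  · have hx_pow : x ^ (i + 1) * y ^ 0 = -(d • (x ^ 1 * y ^ (d - 1))) := by
      rw [nsmul_eq_mul]
      linear_combination hy
    rw [hx_pow]
    exact neg_mem (nsmul_mem (pow_mul_pow_mem_span_loopMonomial K hc (by omega)) d)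
  · rw [pow_mul_pow_eq_zero_of_loop hc hd hx hy le_rfl hj]
    exact zero_mem _

theorem x_mul_mem_span_loopMonomial {z : A}
    (hz : z ∈ Submodule.span K (Set.range (loopMonomial x y c d))) :
    x * z ∈ Submodule.span K (Set.range (loopMonomial x y c d)) := by
  induction hz using Submodule.span_induction with
  | mem _ hz =>
    obtain ⟨p, rfl⟩ := hz
    exact x_mul_loopMonomial_mem_span K hc hd hx hy p
  | zero => simp
  | add _ _ _ _ h₁ h₂ => rw [mul_add]; exact add_mem h₁ h₂
  | smul a _ _ h => rw [mul_smul_comm]; exact Submodule.smul_mem _ a h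

theorem y_mul_mem_span_loopMonomial {z : A}
    (hz : z ∈ Submodule.span K (Set.range (loopMonomial x y c d))) :
    y * z ∈ Submodule.span K (Set.range (loopMonomial x y c d)) := by
  rw [← range_loopMonomial_swap] at hz ⊢
  exact x_mul_mem_span_loopMonomial K hd hc (by linear_combination hy) (by linear_combination hx) hz

end LoopRelations

section LoopPolynomial

variable (c d : ℕ)

noncomputable def loopPolynomial : MvPolynomial (Fin 4) ℂ :=
  X 0 ^ 2 + X 1 ^ 2 + X 2 ^ c * X 3 + X 2 * X 3 ^ d

theorem pderiv_zero_loopPolynomial : pderiv 0 (loopPolynomial c d) = 2 * X 0 := by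
  simp [loopPolynomial, pderiv_X]

theorem pderiv_one_loopPolynomial : pderiv 1 (loopPolynomial c d) = 2 * X 1 := by
  simp [loopPolynomial, pderiv_X]

theorem pderiv_two_loopPolynomial :
    pderiv 2 (loopPolynomial c d) =
      (c : MvPolynomial (Fin 4) ℂ) * X 2 ^ (c - 1) * X 3 + X 3 ^ d := by
  simp [loopPolynomial, pderiv_X]
  ring

theorem pderiv_three_loopPolynomial :
    pderiv 3 (loopPolynomial c d) =
      X 2 ^ c + (d : MvPolynomial (Fin 4) ℂ) * X 2 * X 3 ^ (d - 1) := by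
  simp [loopPolynomial, pderiv_X]
  ring

/-- The coordinates of the class of `x ^ k * y ^ l` in the basis `x ^ i * y ^ j`, `i < c`,
`j < d`, obtained from `x ^ c = -d x y ^ (d - 1)`, `y ^ d = -c x ^ (c - 1) y` and
`x ^ c y = x y ^ d = 0`. -/
noncomputable def loopNormalForm (k l : ℕ) : ℕ × ℕ →₀ ℂ :=
  if k < c ∧ l < d then Finsupp.single (k, l) 1
  else if l = 0 ∧ k < 2 * c - 1 then Finsupp.single (k - c + 1, d - 1) (-d)
  else if k = 0 ∧ l < 2 * d - 1 then Finsupp.single (c - 1, l - d + 1) (-c)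
  else 0

noncomputable def loopFunctional : MvPolynomial (Fin 4) ℂ →ₗ[ℂ] ℕ × ℕ →₀ ℂ :=
  (basisMonomials (Fin 4) ℂ).constr ℂ fun m =>
    if m 0 = 0 ∧ m 1 = 0 then loopNormalForm c d (m 2) (m 3) else 0

abbrev LoopMilnorAlgebra : Type :=
  MvPolynomial (Fin 4) ℂ ⧸ jacobianIdeal (loopPolynomial c d)

variable {c d}

theorem loopNormalForm_relation_two (hc : 2 ≤ c) (hd : 2 ≤ d) (k l : ℕ) :
    (c : ℂ) • loopNormalForm c d (k + (c - 1)) (l + 1) + loopNormalForm c d k (l + d) = 0 := by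
  unfold loopNormalForm
  split_ifs <;> first | omega | simp_all

theorem loopNormalForm_relation_three (hc : 2 ≤ c) (hd : 2 ≤ d) (k l : ℕ) :
    loopNormalForm c d (k + c) l + (d : ℂ) • loopNormalForm c d (k + 1) (l + (d - 1)) = 0 := by
  unfold loopNormalForm
  split_ifs <;> first | omega | simp_all

theorem loopFunctional_monomial (m : Fin 4 →₀ ℕ) (a : ℂ) :
    loopFunctional c d (monomial m a) =
      a • if m 0 = 0 ∧ m 1 = 0 then loopNormalForm c d (m 2) (m 3) else 0 := by
  have hbasis := (basisMonomials (Fin 4) ℂ).constr_basis ℂ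
    (fun m => if m 0 = 0 ∧ m 1 = 0 then loopNormalForm c d (m 2) (m 3) else 0) m
  rw [coe_basisMonomials] at hbasis
  rw [← hbasis, ← map_smul, smul_monomial, smul_eq_mul, mul_one, loopFunctional]

theorem loopFunctional_mul_X_eq_zero (p : MvPolynomial (Fin 4) ℂ) {i : Fin 4}
    (hi : i = 0 ∨ i = 1) : loopFunctional c d (p * X i) = 0 := by
  induction p using MvPolynomial.induction_on' with
  | monomial m a =>
    rw [X, monomial_mul, loopFunctional_monomial, if_neg, smul_zero]
    rcases hi with rfl | rfl <;> simp
  | add p q hp hq => rw [add_mul, map_add, hp, hq, add_zero]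

theorem loopFunctional_monomial_mul_X_pow_mul_X_pow (m : Fin 4 →₀ ℕ) (a : ℂ) (k l : ℕ) :
    loopFunctional c d (monomial m a * (X 2 ^ k * X 3 ^ l)) =
      a • if m 0 = 0 ∧ m 1 = 0 then loopNormalForm c d (m 2 + k) (m 3 + l) else 0 := by
  rw [X_pow_eq_monomial, X_pow_eq_monomial, monomial_mul, monomial_mul, loopFunctional_monomial]
  simp

theorem loopFunctional_eq_zero_of_mem_jacobianIdeal (hc : 2 ≤ c) (hd : 2 ≤ d)
    {p : MvPolynomial (Fin 4) ℂ} (hp : p ∈ jacobianIdeal (loopPolynomial c d)) :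
    loopFunctional c d p = 0 := by
  refine map_eq_zero_of_mem_span_of_monomial_mul _ ?_ hp
  rintro s (rfl | rfl | rfl | rfl) m a
  · rw [pderiv_zero_loopPolynomial, mul_left_comm, ← mul_assoc]
    exact loopFunctional_mul_X_eq_zero _ (.inl rfl)
  · rw [pderiv_one_loopPolynomial, mul_left_comm, ← mul_assoc]
    exact loopFunctional_mul_X_eq_zero _ (.inr rfl)
  · have : monomial m a * pderiv 2 (loopPolynomial c d) =
        monomial m (a * c) * (X 2 ^ (c - 1) * X 3 ^ 1) + monomial m a * (X 2 ^ 0 * X 3 ^ d) := by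
      rw [pderiv_two_loopPolynomial, mul_comm a, ← C_mul_monomial, ← map_natCast C]
      ring
    rw [this, map_add, loopFunctional_monomial_mul_X_pow_mul_X_pow,
      loopFunctional_monomial_mul_X_pow_mul_X_pow, mul_smul, ← smul_add]
    split_ifs
    · rw [add_zero, loopNormalForm_relation_two hc hd, smul_zero]
    · simp
  · have : monomial m a * pderiv 3 (loopPolynomial c d) =
        monomial m a * (X 2 ^ c * X 3 ^ 0) + monomial m (a * d) * (X 2 ^ 1 * X 3 ^ (d - 1)) := by
      rw [pderiv_three_loopPolynomial, mul_comm a, ← C_mul_monomial, ← map_natCast C]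
      ring
    rw [this, map_add, loopFunctional_monomial_mul_X_pow_mul_X_pow,
      loopFunctional_monomial_mul_X_pow_mul_X_pow, mul_smul, ← smul_add]
    split_ifs
    · rw [add_zero, loopNormalForm_relation_three hc hd, smul_zero]
    · simp

theorem mk_pderiv_loopPolynomial (i : Fin 4) :
    Ideal.Quotient.mk (jacobianIdeal (loopPolynomial c d)) (pderiv i (loopPolynomial c d)) = 0 :=
  Ideal.Quotient.eq_zero_iff_mem.2 (Ideal.subset_span (by fin_cases i <;> simp))

theorem mk_X_eq_zero {i : Fin 4} (hi : i = 0 ∨ i = 1) :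
    Ideal.Quotient.mk (jacobianIdeal (loopPolynomial c d)) (X i) = 0 := by
  have h := mk_pderiv_loopPolynomial (c := c) (d := d) i
  rcases hi with rfl | rfl
  · rw [pderiv_zero_loopPolynomial, map_mul, map_ofNat] at h
    exact eq_zero_of_natCast_mul_eq_zero two_ne_zero (by exact_mod_cast h)
  · rw [pderiv_one_loopPolynomial, map_mul, map_ofNat] at h
    exact eq_zero_of_natCast_mul_eq_zero two_ne_zero (by exact_mod_cast h)

theorem loopMilnorAlgebra_relation_two :
    (c : LoopMilnorAlgebra c d) * Ideal.Quotient.mk _ (X 2) ^ (c - 1) *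
      Ideal.Quotient.mk _ (X 3) + Ideal.Quotient.mk _ (X 3) ^ d = 0 := by
  simpa [pderiv_two_loopPolynomial] using mk_pderiv_loopPolynomial (c := c) (d := d) 2

theorem loopMilnorAlgebra_relation_three :
    Ideal.Quotient.mk _ (X 2) ^ c + (d : LoopMilnorAlgebra c d) * Ideal.Quotient.mk _ (X 2) *
      Ideal.Quotient.mk _ (X 3) ^ (d - 1) = 0 := by
  simpa [pderiv_three_loopPolynomial] using mk_pderiv_loopPolynomial (c := c) (d := d) 3

theorem span_loopMonomial_eq_top (hc : 2 ≤ c) (hd : 2 ≤ d) :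
    Submodule.span ℂ (Set.range (loopMonomial (Ideal.Quotient.mk _ (X 2))
      (Ideal.Quotient.mk _ (X 3)) c d)) = (⊤ : Submodule ℂ (LoopMilnorAlgebra c d)) := by
  refine Submodule.eq_top_iff'.2 fun q => ?_
  obtain ⟨p, rfl⟩ := Ideal.Quotient.mk_surjective q
  induction p using MvPolynomial.induction_on with
  | C a =>
    rw [← algebraMap_eq, Ideal.Quotient.mk_algebraMap, Algebra.algebraMap_eq_smul_one]
    simpa using Submodule.smul_mem _ a
      (pow_mul_pow_mem_span_loopMonomial ℂ (x := Ideal.Quotient.mk _ (X 2))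
        (y := Ideal.Quotient.mk _ (X 3)) (i := 0) (j := 0) (by omega) (by omega))
  | add p q hp hq => rw [map_add]; exact add_mem hp hq
  | mul_X p i hp =>
    rw [map_mul, mul_comm]
    fin_cases i <;> simp only [Fin.reduceFinMk, Fin.isValue]
    · rw [mk_X_eq_zero (.inl rfl), zero_mul]; exact zero_mem _
    · rw [mk_X_eq_zero (.inr rfl), zero_mul]; exact zero_mem _
    · exact x_mul_mem_span_loopMonomial ℂ hc hd loopMilnorAlgebra_relation_two
        loopMilnorAlgebra_relation_three hp
    · exact y_mul_mem_span_loopMonomial ℂ hc hd loopMilnorAlgebra_relation_two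
        loopMilnorAlgebra_relation_three hp

theorem linearIndependent_loopMonomial (hc : 2 ≤ c) (hd : 2 ≤ d) :
    LinearIndependent ℂ
      (loopMonomial (Ideal.Quotient.mk (jacobianIdeal (loopPolynomial c d)) (X 2))
        (Ideal.Quotient.mk _ (X 3)) c d) := by
  let J := jacobianIdeal (loopPolynomial c d)
  let ψ : LoopMilnorAlgebra c d →ₗ[ℂ] ℕ × ℕ →₀ ℂ :=
    (J.restrictScalars ℂ).liftQ (loopFunctional c d)
        (fun _ hp => loopFunctional_eq_zero_of_mem_jacobianIdeal hc hd hp) ∘ₗ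
      (Submodule.Quotient.restrictScalarsEquiv ℂ J).symm.toLinearMap
  have hψ_mk (p : MvPolynomial (Fin 4) ℂ) :
      ψ (Ideal.Quotient.mk J p) = loopFunctional c d p := rfl
  refine LinearIndependent.of_comp ψ ?_
  have hψ : ψ ∘ loopMonomial (Ideal.Quotient.mk J (X 2)) (Ideal.Quotient.mk J (X 3)) c d =
      (fun q => Finsupp.single q 1) ∘ Prod.map Fin.val Fin.val := by
    ext ⟨i, j⟩ : 1
    have := loopFunctional_monomial_mul_X_pow_mul_X_pow (c := c) (d := d) 0 1 i j
    rw [Function.comp_apply, loopMonomial, ← map_pow, ← map_pow, ← map_mul, hψ_mk]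
    simpa [loopNormalForm] using this
  rw [hψ]
  exact (Finsupp.linearIndependent_single_one ℂ _).comp _
    (Fin.val_injective.prodMap Fin.val_injective)

end LoopPolynomial

/-- The Milnor number of the suspended loop-type singularity
`x₁² + x₂² + x₃^c x₄ + x₃ x₄^d` is `c·d`. -/
theorem milnor_number_loop (c d : ℕ) (hc : 2 ≤ c) (hd : 2 ≤ d) :
    FiniteDimensional ℂ
      (MvPolynomial (Fin 4) ℂ ⧸
        jacobianIdeal (X 0 ^ 2 + X 1 ^ 2 + X 2 ^ c * X 3 + X 2 * X 3 ^ d)) ∧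
    Module.finrank ℂ
      (MvPolynomial (Fin 4) ℂ ⧸
        jacobianIdeal (X 0 ^ 2 + X 1 ^ 2 + X 2 ^ c * X 3 + X 2 * X 3 ^ d)) = c * d := by
  let b : Module.Basis (Fin c × Fin d) ℂ (LoopMilnorAlgebra c d) :=
    .mk (linearIndependent_loopMonomial hc hd) (span_loopMonomial_eq_top hc hd).ge
  exact ⟨.of_basis b, (Module.finrank_eq_card_basis b).trans (by simp)⟩
end

section
/- Let c, d ≥ 2 be integers. Let Γ be the subgroup of (ℂ*)⁵ consisting of tuples (t₀, t₁, t₂, t₃, t₄) satisfying t₁² = t₀t₁t₂t₃t₄, t₂² = t₀t₁t₂t₃t₄, t₃^c·t₄ = t₀t₁t₂t₃t₄ and t₃·t₄^d = t₀t₁t₂t₃t₄, and let χ : Γ → ℂ* be the group homomorphism χ(t₀,t₁,t₂,t₃,t₄) = t₀t₁t₂t₃t₄. Then the kernel of χ is isomorphic, as a group, to (ℤ/2ℤ) × (ℤ/2ℤ) × (ℤ/(cd-1)ℤ). -/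
/-! On the kernel of `χ` the defining equations of `Γ` become `t₁² = t₂² = 1`,
`t₃^c t₄ = t₃ t₄^d = 1` and `t₀t₁t₂t₃t₄ = 1`. The third gives `t₄ = t₃^{-c}`, after which
the fourth says `t₃^{cd-1} = 1`, and `t₀` is determined by the others. Hence `(t₁, t₂, t₃)`
identifies the kernel with `μ₂ × μ₂ × μ_{cd-1}`, and `μₙ(ℂ)` is cyclic of order `n`. -/

/-- Evaluation at the `i`-th coordinate, as a homomorphism `(ℂ*)⁵ → ℂ*`. -/
def ev (i : Fin 5) : (Fin 5 → ℂˣ) →* ℂˣ := Pi.evalMonoidHom (fun _ => ℂˣ) i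

/-- The character `χ(t₀,…,t₄) = t₀t₁t₂t₃t₄` on `(ℂ*)⁵`. -/
def prodChar : (Fin 5 → ℂˣ) →* ℂˣ := ev 0 * ev 1 * ev 2 * ev 3 * ev 4

/-- The maximal symmetry group of the loop-type polynomial
`x₁²+x₂²+x₃^c x₄+x₃ x₄^d`: tuples `(t₀,…,t₄)` with `t₁² = t₂² = t₃^c t₄ =
t₃ t₄^d = t₀t₁t₂t₃t₄`, realized as an intersection of kernels. -/
def gammaLoop (c d : ℕ) : Subgroup (Fin 5 → ℂˣ) :=
  MonoidHom.ker (ev 1 ^ 2 * prodChar⁻¹) ⊓ MonoidHom.ker (ev 2 ^ 2 * prodChar⁻¹) ⊓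
    MonoidHom.ker (ev 3 ^ c * ev 4 * prodChar⁻¹) ⊓ MonoidHom.ker (ev 3 * ev 4 ^ d * prodChar⁻¹)

theorem pow_mul_sub_one_eq_one_of_pow_mul_eq_one {G : Type*} [Group G] {x y : G} {c d : ℕ}
    (hxy : x ^ c * y = 1) (hyx : x * y ^ d = 1) : x ^ (c * d - 1) = 1 := by
  obtain hcd | hcd := eq_or_ne (c * d) 0
  · simp [hcd]
  have hy : y = (x ^ c)⁻¹ := eq_inv_of_mul_eq_one_right hxy
  have hx : x = x ^ (c * d) := by rwa [hy, inv_pow, ← pow_mul, mul_inv_eq_one] at hyx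
  rw [← mul_eq_right (b := x), pow_sub_one_mul hcd, ← hx]

theorem prodChar_apply (t : Fin 5 → ℂˣ) : prodChar t = t 0 * t 1 * t 2 * t 3 * t 4 := rfl

theorem mem_gammaLoop_and_prodChar_eq_one_iff {c d : ℕ} {t : Fin 5 → ℂˣ} :
    t ∈ gammaLoop c d ∧ prodChar t = 1 ↔
      t 1 ^ 2 = 1 ∧ t 2 ^ 2 = 1 ∧ t 3 ^ c * t 4 = 1 ∧ t 3 * t 4 ^ d = 1 ∧ prodChar t = 1 := by
  simp only [gammaLoop, Subgroup.mem_inf, MonoidHom.mem_ker, MonoidHom.mul_apply,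
    MonoidHom.inv_apply, MonoidHom.pow_apply, mul_inv_eq_one, ev, Pi.evalMonoidHom_apply,
    and_assoc]
  constructor
  · rintro ⟨h1, h2, h3, h4, h⟩
    rw [h] at h1 h2 h3 h4
    exact ⟨h1, h2, h3, h4, h⟩
  · rintro ⟨h1, h2, h3, h4, h⟩
    rw [h]
    exact ⟨h1, h2, h3, h4, rfl⟩

noncomputable def kerToRootsOfUnity (c d : ℕ) :
    MonoidHom.ker (prodChar.domRestrict (gammaLoop c d)) →*
      rootsOfUnity 2 ℂ × rootsOfUnity 2 ℂ × rootsOfUnity (c * d - 1) ℂ where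
  toFun x :=
    have ht := mem_gammaLoop_and_prodChar_eq_one_iff.1 ⟨x.1.2, x.2⟩
    (⟨x.1.1 1, (mem_rootsOfUnity _ _).2 ht.1⟩, ⟨x.1.1 2, (mem_rootsOfUnity _ _).2 ht.2.1⟩,
      ⟨x.1.1 3, (mem_rootsOfUnity _ _).2 <|
        pow_mul_sub_one_eq_one_of_pow_mul_eq_one ht.2.2.1 ht.2.2.2.1⟩)
  map_one' := rfl
  map_mul' _ _ := rfl

theorem kerToRootsOfUnity_injective (c d : ℕ) : Function.Injective (kerToRootsOfUnity c d) := by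
  refine (injective_iff_map_eq_one _).2 fun x hx => ?_
  obtain ⟨-, -, h3c, -, hprod⟩ := mem_gammaLoop_and_prodChar_eq_one_iff.1 ⟨x.1.2, x.2⟩
  simp only [kerToRootsOfUnity, MonoidHom.coe_mk, OneHom.coe_mk, Prod.mk_eq_one,
    Subgroup.mk_eq_one] at hx
  obtain ⟨h1, h2, h3⟩ := hx
  have h4 : x.1.1 4 = 1 := by simpa [h3] using h3c
  have h0 : x.1.1 0 = 1 := by simpa [prodChar_apply, h1, h2, h3, h4] using hprod
  refine Subtype.ext (Subtype.ext (funext fun i => ?_))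
  fin_cases i <;> assumption

theorem kerToRootsOfUnity_surjective {c d : ℕ} (hcd : c * d ≠ 0) :
    Function.Surjective (kerToRootsOfUnity c d) := by
  rintro ⟨⟨a, ha : a ^ 2 = 1⟩, ⟨b, hb : b ^ 2 = 1⟩, ⟨z, hz : z ^ (c * d - 1) = 1⟩⟩
  have hzcd : z ^ (c * d) = z := by rw [← pow_sub_one_mul hcd, hz, one_mul]
  set t : Fin 5 → ℂˣ := ![(a * b * z * (z ^ c)⁻¹)⁻¹, a, b, z, (z ^ c)⁻¹]
  have ht : t ∈ gammaLoop c d ∧ prodChar t = 1 := by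
    refine mem_gammaLoop_and_prodChar_eq_one_iff.2 ⟨ha, hb, mul_inv_cancel _, ?_, ?_⟩
    · simp [t, ← pow_mul, hzcd]
    · simp only [prodChar_apply, t, Matrix.cons_val]; group
  exact ⟨⟨⟨t, ht.1⟩, ht.2⟩, rfl⟩

theorem nonempty_rootsOfUnity_mulEquiv_zmod (M : Type*) [CommMonoid M] (n : ℕ) [NeZero n]
    [HasEnoughRootsOfUnity M n] : Nonempty (rootsOfUnity n M ≃* Multiplicative (ZMod n)) :=
  ⟨mulEquivOfCyclicCardEq <| by
    rw [HasEnoughRootsOfUnity.natCard_rootsOfUnity, Nat.card_eq_fintype_card,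
      Fintype.card_multiplicative, ZMod.card]⟩

/-- The kernel of the character `χ(t₀,…,t₄) = t₀t₁t₂t₃t₄` on the maximal symmetry
group of the loop-type polynomial is isomorphic to `ℤ/2 × ℤ/2 × ℤ/(cd-1)`. -/
theorem ker_char_gammaLoop (c d : ℕ) (hc : 2 ≤ c) (hd : 2 ≤ d) :
    Nonempty
      ((MonoidHom.ker (prodChar.domRestrict (gammaLoop c d))) ≃*
        Multiplicative (ZMod 2) × Multiplicative (ZMod 2) ×
          Multiplicative (ZMod (c * d - 1))) := by
  have hcd : 2 * 2 ≤ c * d := Nat.mul_le_mul hc hd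
  have : NeZero (c * d - 1) := ⟨by omega⟩
  obtain ⟨e₂⟩ := nonempty_rootsOfUnity_mulEquiv_zmod ℂ 2
  obtain ⟨e⟩ := nonempty_rootsOfUnity_mulEquiv_zmod ℂ (c * d - 1)
  exact ⟨(MulEquiv.ofBijective _ ⟨kerToRootsOfUnity_injective c d,
    kerToRootsOfUnity_surjective (by omega)⟩).trans (e₂.prodCongr (e₂.prodCongr e))⟩
end

section
/- Let a, b ≥ 2 be integers, set g = gcd(a-1, b), and let k = 1 - (a-1+b)/g (an integer since g divides a-1+b, and k ≤ 0). Then: X_k = Y_k = {(a-1)/g}, W_k = ∅, and Z_{i,k} = ∅ for every integer i with 1 ≤ i ≤ b-2. -/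
/-!
Write `n = a + b - 1`, `p = a - 1` and `A = (a - 1)/g`. Since `g` divides both `p` and `n`, the
choice `k = 1 - n/g` turns the affine form into `n * m + p * k = n * (m - A) + p`. Each defining
condition of `X_k`, `W_k`, `Z_{i,k}` then squeezes the multiple `n * (m - A)` of `n` strictly
between `-n` and `n`, so it vanishes, which forces `m = A` for `X_k` and is impossible for `W_k`
and `Z_{i,k}`; `Y_k` is cut out by `n * m = n * A`.
-/

theorem mul_add_mul_one_sub_ediv {g p n : ℤ} (hp : g ∣ p) (hn : g ∣ n) (m : ℤ) :
    n * m + p * (1 - n / g) = n * (m - p / g) + p := by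
  rw [mul_sub, mul_one, ← Int.mul_ediv_assoc p hn, mul_comm p n, Int.mul_ediv_assoc n hp]
  ring

theorem eq_of_abs_mul_sub_lt {n m A : ℤ} (h : |n * (m - A)| < n) : m = A := by
  have hn : n ≠ 0 := ((abs_nonneg _).trans_lt h).ne'
  have hzero := Int.eq_zero_of_abs_lt_dvd (dvd_mul_right n (m - A)) h
  exact sub_eq_zero.1 ((mul_eq_zero.1 hzero).resolve_left hn)

section ChainSets

variable {n p k A : ℤ}

theorem chainX_eq_singleton (hL : ∀ m, n * m + p * k = n * (m - A) + p)
    (hp : 0 ≤ p) (hpn : p < n) (hA : 0 ≤ A) :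
    {m : ℤ | 0 ≤ m ∧ 0 ≤ n * m + p * k ∧ n * m + p * k ≤ 2 * p} = {A} := by
  ext m
  simp only [Set.mem_ofPred_eq, Set.mem_singleton_iff, hL]
  constructor
  · rintro ⟨-, hlo, hhi⟩
    exact eq_of_abs_mul_sub_lt (n := n) (abs_lt.2 ⟨by linarith, by linarith⟩)
  · rintro rfl
    simp only [sub_self, mul_zero, zero_add]
    exact ⟨hA, hp, by linarith⟩

theorem chainY_eq_singleton (hL : ∀ m, n * m + p * k = n * (m - A) + p)
    (hn : n ≠ 0) (hA : 0 ≤ A) :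
    {m : ℤ | 0 ≤ m ∧ n * m = p * (1 - k)} = {A} := by
  have hpk : p * (1 - k) = n * A := by linear_combination -hL 0
  ext m
  simp only [Set.mem_ofPred_eq, Set.mem_singleton_iff, hpk, mul_right_inj' hn]
  exact ⟨fun h => h.2, fun h => ⟨h ▸ hA, h⟩⟩

theorem chainW_eq_empty (hL : ∀ m, n * m + p * k = n * (m - A) + p) (q : ℤ)
    (hp : 0 ≤ p) (hqn : q + p < n) :
    {m : ℤ | m ≤ -k ∧ 1 ≤ -n * m - p * k ∧ -n * m - p * k ≤ q} = (∅ : Set ℤ) := by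
  refine Set.eq_empty_of_forall_notMem fun m ⟨_, hlo, hhi⟩ => ?_
  have hform : -n * m - p * k = -(n * (m - A) + p) := by rw [← hL]; ring
  rw [hform] at hlo hhi
  have hmA : m = A := eq_of_abs_mul_sub_lt (n := n) (abs_lt.2 ⟨by linarith, by linarith⟩)
  rw [hmA, sub_self, mul_zero] at hlo
  linarith

theorem chainZ_eq_empty (hL : ∀ m, n * m + p * k = n * (m - A) + p) {i : ℤ}
    (hi : 0 ≤ i) (hin : i + p < n) :
    {m : ℤ | 1 ≤ n * m + i + p * k ∧ n * m + i + p * k ≤ p - 1} = (∅ : Set ℤ) := by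
  refine Set.eq_empty_of_forall_notMem fun m ⟨hlo, hhi⟩ => ?_
  rw [add_right_comm, hL] at hlo hhi
  have hmA : m = A := eq_of_abs_mul_sub_lt (n := n) (abs_lt.2 ⟨by linarith, by linarith⟩)
  rw [hmA, sub_self, mul_zero] at hhi
  linarith

end ChainSets

/-- For the chain-type polynomial with `g = gcd(a-1,b)` and
`k = 1 - (a-1+b)/g`, the sets `X_k` and `Y_k` both equal `{(a-1)/g}`, while
`W_k` and all the `Z_{i,k}` are empty. -/
theorem chain_first_concentrated_degree (a b g k : ℤ) (ha : 2 ≤ a) (hb : 2 ≤ b)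
    (hg : g = (Int.gcd (a - 1) b : ℤ)) (hk : k = 1 - (a - 1 + b) / g) :
    {m : ℤ | 0 ≤ m ∧ 0 ≤ (a + b - 1) * m + (a - 1) * k ∧
        (a + b - 1) * m + (a - 1) * k ≤ 2 * (a - 1)} = {(a - 1) / g} ∧
    {m : ℤ | 0 ≤ m ∧ (a + b - 1) * m = (a - 1) * (1 - k)} = {(a - 1) / g} ∧
    {m : ℤ | m ≤ -k ∧ 1 ≤ -(a + b - 1) * m - (a - 1) * k ∧
        -(a + b - 1) * m - (a - 1) * k ≤ b - 2} = (∅ : Set ℤ) ∧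
    ∀ i : ℤ, 1 ≤ i → i ≤ b - 2 →
      {m : ℤ | 1 ≤ (a + b - 1) * m + i + (a - 1) * k ∧
          (a + b - 1) * m + i + (a - 1) * k ≤ a - 2} = (∅ : Set ℤ) := by
  have hga : g ∣ a - 1 := hg ▸ Int.gcd_dvd_left (a - 1) b
  have hgn : g ∣ a - 1 + b := dvd_add hga (hg ▸ Int.gcd_dvd_right (a - 1) b)
  have hL : ∀ m, (a + b - 1) * m + (a - 1) * k = (a + b - 1) * (m - (a - 1) / g) + (a - 1) := by
    intro m
    rw [hk, show a + b - 1 = a - 1 + b by ring]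
    exact mul_add_mul_one_sub_ediv hga hgn m
  have hA : 0 ≤ (a - 1) / g := Int.ediv_nonneg (by omega) (hg ▸ Int.natCast_nonneg _)
  refine ⟨chainX_eq_singleton hL (by omega) (by omega) hA,
    chainY_eq_singleton hL (by omega) hA, chainW_eq_empty hL _ (by omega) (by omega),
    fun i hi1 hi2 => ?_⟩
  rw [show a - 2 = (a - 1) - 1 by ring]
  exact chainZ_eq_empty hL (by omega) (by omega)
end

section
/- Let c, d ≥ 2 be integers, set g = gcd(c-1, d-1), and let k = 1 - (c+d-2)/g (an integer since g divides c+d-2, and k ≤ 0). Then: X̃_k = Ỹ_k = {(c-1)/g}, W̃_k = {(c-1)/g - 1}, and Z̃_{j,k} = ∅ for every integer j with 1 ≤ j ≤ d-1. -/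
/-!
With `a = (c-1)/g` the value of `k` satisfies `(c-1)(1-k) = (c+d-2)a`, so every linear form in the
definitions becomes `(c+d-2)(m-a) + (c-1)`. Each defining condition then traps the multiple
`(c+d-2)(m-a)` of `c+d-2 = (c-1)+(d-1)` in a window that contains at most one multiple of `c+d-2`
(for `Z̃` none).
-/

theorem Int.mul_ediv_left_comm_of_dvd {g x y : ℤ} (hx : g ∣ x) (hy : g ∣ y) :
    x * (y / g) = y * (x / g) := by
  rw [← Int.mul_ediv_assoc _ hy, ← Int.mul_ediv_assoc _ hx, mul_comm]

theorem Int.eq_of_mul_sub_one_lt_of_lt_mul_add_one {n s t : ℤ} (hn : 0 < n)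
    (h₁ : n * (s - 1) < n * t) (h₂ : n * t < n * (s + 1)) : t = s := by
  have := lt_of_mul_lt_mul_left h₁ hn.le
  have := lt_of_mul_lt_mul_left h₂ hn.le
  omega

namespace LoopSingularity

def W (c d k : ℤ) : Set ℤ :=
  {m | m ≤ -k ∧ 1 ≤ -(c + d - 2) * m - (c - 1) * k ∧ -(c + d - 2) * m - (c - 1) * k ≤ 2 * (d - 1)}

def X (c d k : ℤ) : Set ℤ :=
  {m | 0 ≤ m ∧ 0 ≤ (c + d - 2) * m + (c - 1) * k ∧ (c + d - 2) * m + (c - 1) * k ≤ c - 1}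

def Y (c d k : ℤ) : Set ℤ :=
  {m | 0 ≤ m ∧ (c + d - 2) * m = (c - 1) * (1 - k)}

def Z (c d j k : ℤ) : Set ℤ :=
  {m | 1 ≤ (c + d - 2) * m + j + (c - 1) * k ∧ (c + d - 2) * m + j + (c - 1) * k ≤ c - 2}

variable {c d a k : ℤ}

theorem mul_add_mul_eq (hk : (c - 1) * (1 - k) = (c + d - 2) * a) (m : ℤ) :
    (c + d - 2) * m + (c - 1) * k = (c + d - 2) * (m - a) + (c - 1) := by
  linear_combination -hk

theorem X_eq_singleton (hc : 2 ≤ c) (hd : 2 ≤ d) (ha : 0 ≤ a)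
    (hk : (c - 1) * (1 - k) = (c + d - 2) * a) : X c d k = {a} := by
  ext m
  simp only [X, Set.mem_ofPred_eq, Set.mem_singleton_iff, mul_add_mul_eq hk]
  constructor
  · rintro ⟨-, h₁, h₂⟩
    have : m - a = 0 :=
      Int.eq_of_mul_sub_one_lt_of_lt_mul_add_one (n := c + d - 2) (by omega)
        (by linarith) (by linarith)
    omega
  · rintro rfl
    simp only [sub_self, mul_zero, zero_add]
    omega

theorem Y_eq_singleton (hc : 2 ≤ c) (hd : 2 ≤ d) (ha : 0 ≤ a)
    (hk : (c - 1) * (1 - k) = (c + d - 2) * a) : Y c d k = {a} := by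
  ext m
  simp only [Y, Set.mem_ofPred_eq, Set.mem_singleton_iff, hk,
    mul_right_inj' (show c + d - 2 ≠ 0 by omega)]
  constructor
  · exact fun h ↦ h.2
  · rintro rfl
    exact ⟨ha, rfl⟩

theorem W_eq_singleton (hc : 2 ≤ c) (hd : 2 ≤ d) (ha : 0 ≤ a)
    (hk : (c - 1) * (1 - k) = (c + d - 2) * a) : W c d k = {a - 1} := by
  have hform (m : ℤ) : -(c + d - 2) * m - (c - 1) * k = (c + d - 2) * (a - m) - (c - 1) := by
    linear_combination hk
  ext m
  simp only [W, Set.mem_ofPred_eq, Set.mem_singleton_iff, hform]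
  constructor
  · rintro ⟨-, h₁, h₂⟩
    have : a - m = 1 :=
      Int.eq_of_mul_sub_one_lt_of_lt_mul_add_one (n := c + d - 2) (by omega)
        (by linarith) (by linarith)
    omega
  · rintro rfl
    -- `a ≤ 1 - k` because `(c-1)(1-k) = (c+d-2)a` and `c - 1 < c + d - 2`
    have hak : a ≤ 1 - k := by nlinarith
    refine ⟨by omega, ?_, ?_⟩ <;> linarith

theorem Z_eq_empty (hc : 2 ≤ c) (hd : 2 ≤ d) (hk : (c - 1) * (1 - k) = (c + d - 2) * a)
    {j : ℤ} (hj₁ : 1 ≤ j) (hj₂ : j ≤ d - 1) : Z c d j k = ∅ := by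
  refine Set.eq_empty_of_forall_notMem fun m ⟨h₁, h₂⟩ ↦ ?_
  rw [add_right_comm, mul_add_mul_eq hk] at h₁ h₂
  have hneg : m - a < 0 :=
    neg_of_mul_neg_right (a := c + d - 2) (by linarith) (by omega)
  have : (c + d - 2) * (m - a) ≤ (c + d - 2) * (-1) :=
    mul_le_mul_of_nonneg_left (by omega) (by omega)
  linarith

end LoopSingularity

open LoopSingularity in
/-- For the loop-type polynomial with `g = gcd(c-1,d-1)` and
`k = 1 - (c+d-2)/g`, the sets `X̃_k` and `Ỹ_k` both equal `{(c-1)/g}`,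
`W̃_k = {(c-1)/g - 1}`, and all the `Z̃_{j,k}` are empty. -/
theorem loop_first_concentrated_degree (c d g k : ℤ) (hc : 2 ≤ c) (hd : 2 ≤ d)
    (hg : g = (Int.gcd (c - 1) (d - 1) : ℤ)) (hk : k = 1 - (c + d - 2) / g) :
    {m : ℤ | 0 ≤ m ∧ 0 ≤ (c + d - 2) * m + (c - 1) * k ∧
        (c + d - 2) * m + (c - 1) * k ≤ c - 1} = {(c - 1) / g} ∧
    {m : ℤ | 0 ≤ m ∧ (c + d - 2) * m = (c - 1) * (1 - k)} = {(c - 1) / g} ∧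
    {m : ℤ | m ≤ -k ∧ 1 ≤ -(c + d - 2) * m - (c - 1) * k ∧
        -(c + d - 2) * m - (c - 1) * k ≤ 2 * (d - 1)} = {(c - 1) / g - 1} ∧
    ∀ j : ℤ, 1 ≤ j → j ≤ d - 1 →
      {m : ℤ | 1 ≤ (c + d - 2) * m + j + (c - 1) * k ∧
          (c + d - 2) * m + j + (c - 1) * k ≤ c - 2} = (∅ : Set ℤ) := by
  have hgc : g ∣ c - 1 := hg ▸ Int.gcd_dvd_left _ _
  have hgcd : g ∣ c + d - 2 := by
    rw [show c + d - 2 = (c - 1) + (d - 1) by ring]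
    exact dvd_add hgc (hg ▸ Int.gcd_dvd_right _ _)
  have ha : 0 ≤ (c - 1) / g := Int.ediv_nonneg (by omega) (hg ▸ Int.natCast_nonneg _)
  have hrel : (c - 1) * (1 - k) = (c + d - 2) * ((c - 1) / g) := by
    rw [hk, sub_sub_cancel]
    exact Int.mul_ediv_left_comm_of_dvd hgc hgcd
  exact ⟨X_eq_singleton hc hd ha hrel, Y_eq_singleton hc hd ha hrel,
    W_eq_singleton hc hd ha hrel, fun j hj₁ hj₂ ↦ Z_eq_empty hc hd hrel hj₁ hj₂⟩
end

section
/- Let e, f ≥ 2 be integers, set g = gcd(e, f), and let k = 1 - (e+f)/g (an integer since g divides e+f, and k ≤ 0). Then F^{k-1}_{-1,-1} = {(f/g, e/g)}, and F^k_{i,j} = ∅ for all integers i, j with 0 ≤ i ≤ e-2 and 0 ≤ j ≤ f-2. -/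
/-!
Write `a = e/g` and `b = f/g`, so that `b * e = a * f` and `k = 1 - (a + b)`. For any solution
`(m, n)` of `i + m e = j + n f` with `m + n = a + b - c`, eliminating `n` gives
`(e + f) (b - m) = i - j + c f`. For `c = 0`, `i = j = -1` this forces `(m, n) = (b, a)`; for
`c = 1` and `0 ≤ i ≤ e - 2`, `0 ≤ j ≤ f - 2` it makes `e + f` divide a number strictly between
`0` and `e + f`, which is impossible.
-/

theorem Int.mul_ediv_comm_of_dvd {e f g : ℤ} (he : g ∣ e) (hf : g ∣ f) :
    f / g * e = e / g * f := by
  rw [← Int.mul_ediv_assoc' e hf, ← Int.mul_ediv_assoc' f he, mul_comm]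

section

variable {e f a b i j m n : ℤ}

theorem add_mul_sub_eq_of_add_eq {c : ℤ} (hab : b * e = a * f) (hsum : m + n = a + b - c)
    (heq : i + m * e = j + n * f) : (e + f) * (b - m) = i - j + c * f := by
  obtain rfl : n = a + b - c - m := by omega
  linear_combination hab - heq

theorem eq_of_add_mul_eq_add_mul (hef : e + f ≠ 0) (hab : b * e = a * f)
    (hsum : m + n = a + b) (heq : i + m * e = i + n * f) : m = b ∧ n = a := by
  have key : (e + f) * (b - m) = 0 := by
    rw [add_mul_sub_eq_of_add_eq (c := 0) hab (by omega) heq]; ring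
  have hm : m = b := by
    rcases mul_eq_zero.mp key with h | h <;> omega
  omega

theorem add_mul_ne_add_mul (hab : b * e = a * f) (hsum : m + n = a + b - 1)
    (hi : 0 ≤ i) (hie : i ≤ e - 2) (hj : 0 ≤ j) (hjf : j ≤ f - 2) :
    i + m * e ≠ j + n * f := by
  intro heq
  have key : (e + f) * (b - m) = i - j + f := by
    simpa using add_mul_sub_eq_of_add_eq hab hsum heq
  have hzero : i - j + f = 0 :=
    Int.eq_zero_of_dvd_of_nonneg_of_lt (by omega) (by omega) (Dvd.intro _ key)
  omega

end

/-- For the Fermat-type polynomial with `g = gcd(e,f)` and `k = 1 - (e+f)/g`,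
the set `F^{k-1}_{-1,-1}` equals `{(f/g, e/g)}` and all the sets `F^k_{i,j}`
with `0 ≤ i ≤ e-2`, `0 ≤ j ≤ f-2` are empty. -/
theorem fermat_first_concentrated_degree (e f g k : ℤ) (he : 2 ≤ e) (hf : 2 ≤ f)
    (hg : g = (Int.gcd e f : ℤ)) (hk : k = 1 - (e + f) / g) :
    {p : ℤ × ℤ | -1 + p.1 * e = -1 + p.2 * f ∧ 0 ≤ -1 + p.1 * e ∧
        p.1 + p.2 = -(k - 1)} = {(f / g, e / g)} ∧
    ∀ i j : ℤ, 0 ≤ i → i ≤ e - 2 → 0 ≤ j → j ≤ f - 2 →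
      {p : ℤ × ℤ | i + p.1 * e = j + p.2 * f ∧ 0 ≤ i + p.1 * e ∧
          p.1 + p.2 = -k} = (∅ : Set (ℤ × ℤ)) := by
  have hge : g ∣ e := hg ▸ Int.gcd_dvd_left e f
  have hgf : g ∣ f := hg ▸ Int.gcd_dvd_right e f
  have hab : f / g * e = e / g * f := Int.mul_ediv_comm_of_dvd hge hgf
  rw [Int.add_ediv_of_dvd_left hge] at hk
  refine ⟨?_, fun i j hi hie hj hjf => ?_⟩
  · ext ⟨m, n⟩
    simp only [Set.mem_ofPred_eq, Set.mem_singleton_iff, Prod.mk.injEq]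
    constructor
    · rintro ⟨heq, -, hsum⟩
      exact eq_of_add_mul_eq_add_mul (by omega) hab (by omega) heq
    · rintro ⟨rfl, rfl⟩
      have hb : 0 < f / g := Int.ediv_pos_of_pos_of_dvd (by omega) (by omega) hgf
      have : 0 < f / g * e := mul_pos hb (by omega)
      exact ⟨by linarith, by omega, by omega⟩
  · refine Set.eq_empty_of_forall_notMem fun ⟨m, n⟩ ⟨heq, _, hsum⟩ => ?_
    exact add_mul_ne_add_mul hab (by omega) hi hie hj hjf heq
end

section
/- Let a, b, c, d be integers with a, b, c, d ≥ 2. Set ρ = gcd(a-1, b) and assume: ρ ≥ 2; gcd(c-1, d-1) = ρ - 1; min(a-1, b) = min(c, d) = c; (ρ-1)(a-1+b) = ρ(c+d-2); and (ρ-1)·ab = ρ·(cd - 1). Then b = c = ρ and ρ(d-1) = (a-1)(ρ-1); in particular, gcd(a-1,b) = b = min(a-1,b) and gcd(c-1,d-1) = c-1 divides d-1. -/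
/-!
Put `x = a - 1`. Subtracting the `κ`-relation from the `σ`-relation gives
`(ρ - 1) x (b - 1) = ρ (c - 1)(d - 1)`. If `min (a - 1) b = b`, then `c = b` and one cancels
`b - 1`, which leaves two linear relations forcing `b = ρ`. If instead `c = a - 1 < b`,
eliminating `d` yields `(ρ - 1) b = ρ (ρ - 1) - (x - ρ)²`, so `b ≤ ρ`; since `ρ ∣ b` this
means `b = ρ = x`, contradicting `x < b`.
-/

theorem eq_and_eq_of_kappa_sigma_of_c_eq_b {R : Type*} [CommRing R] [IsDomain R]
    {a b d ρ : R} (hb : b ≠ 1)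
    (hκ : (ρ - 1) * (a - 1 + b) = ρ * (b + d - 2))
    (hσ : (ρ - 1) * (a * b) = ρ * (b * d - 1)) :
    b = ρ ∧ ρ * (d - 1) = (a - 1) * (ρ - 1) := by
  have hfactor : (b - 1) * ((a - 1) * (ρ - 1) - ρ * (d - 1)) = 0 := by
    linear_combination hσ - hκ
  have hd : ρ * (d - 1) = (a - 1) * (ρ - 1) :=
    (sub_eq_zero.mp ((mul_eq_zero.mp hfactor).resolve_left (sub_ne_zero.mpr hb))).symm
  exact ⟨by linear_combination -hκ - hd, hd⟩

theorem sub_one_mul_eq_of_kappa_sigma_of_c_eq_a_sub_one {R : Type*} [CommRing R] {a b d ρ : R}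
    (hκ : (ρ - 1) * (a - 1 + b) = ρ * (a - 1 + d - 2))
    (hσ : (ρ - 1) * (a * b) = ρ * ((a - 1) * d - 1)) :
    (ρ - 1) * b = ρ * (ρ - 1) - (a - 1 - ρ) ^ 2 := by
  linear_combination hσ - (a - 1) * hκ

theorem Int.eq_of_dvd_of_sub_one_mul_eq {b x ρ : ℤ} (hb : 0 < b) (hρ : 1 < ρ) (hdvd : ρ ∣ b)
    (h : (ρ - 1) * b = ρ * (ρ - 1) - (x - ρ) ^ 2) :
    b = ρ ∧ x = ρ := by
  have hρb : ρ ≤ b := Int.le_of_dvd hb hdvd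
  have hsq : (x - ρ) ^ 2 = 0 := by nlinarith [sq_nonneg (x - ρ)]
  exact ⟨by nlinarith, sub_eq_zero.mp (pow_eq_zero_iff two_ne_zero |>.mp hsq)⟩

theorem chain_vs_loop_arithmetic_general (a b c d ρ : ℤ) (hb : 2 ≤ b)
    (hρdef : ρ = (Int.gcd (a - 1) b : ℤ)) (hρ2 : 2 ≤ ρ)
    (hgcd : (Int.gcd (c - 1) (d - 1) : ℤ) = ρ - 1)
    (hmin : min (a - 1) b = min c d) (hminc : min c d = c)
    (hκ : (ρ - 1) * (a - 1 + b) = ρ * (c + d - 2))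
    (hσ : (ρ - 1) * (a * b) = ρ * (c * d - 1)) :
    b = ρ ∧ c = ρ ∧ ρ * (d - 1) = (a - 1) * (ρ - 1) ∧
      (Int.gcd (a - 1) b : ℤ) = b ∧ b = min (a - 1) b ∧
      (Int.gcd (c - 1) (d - 1) : ℤ) = c - 1 ∧ (c - 1) ∣ (d - 1) := by
  rcases le_or_gt b (a - 1) with hba | hab
  · have hcb : c = b := by rw [← hminc, ← hmin, min_eq_right hba]
    subst c
    obtain ⟨hbρ, hd⟩ := eq_and_eq_of_kappa_sigma_of_c_eq_b (by omega) hκ hσ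
    have hgcd' : (Int.gcd (b - 1) (d - 1) : ℤ) = b - 1 := by rw [hgcd, hbρ]
    exact ⟨hbρ, hbρ, hd, by rw [← hρdef, hbρ], (min_eq_right hba).symm, hgcd',
      hgcd' ▸ Int.gcd_dvd_right (b - 1) (d - 1)⟩
  · have hca : c = a - 1 := by rw [← hminc, ← hmin, min_eq_left hab.le]
    subst c
    have hloop := sub_one_mul_eq_of_kappa_sigma_of_c_eq_a_sub_one hκ hσ
    obtain ⟨hbρ, haρ⟩ := Int.eq_of_dvd_of_sub_one_mul_eq (by omega) (by omega)
      (hρdef ▸ Int.gcd_dvd_right (a - 1) b) hloop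
    omega

/-- The arithmetic core of the comparison of chain-type and loop-type links:
equality of the contact invariants `ρ`, `λ`, `κ`, `σ` forces `b = c = ρ` and
`ρ(d-1) = (a-1)(ρ-1)`; in particular `gcd(a-1,b) = b = min(a-1,b)` and
`gcd(c-1,d-1) = c-1` divides `d-1`. -/
theorem chain_vs_loop_arithmetic (a b c d ρ : ℤ) (ha : 2 ≤ a) (hb : 2 ≤ b)
    (hc : 2 ≤ c) (hd : 2 ≤ d)
    (hρdef : ρ = (Int.gcd (a - 1) b : ℤ)) (hρ2 : 2 ≤ ρ)
    (hgcd : (Int.gcd (c - 1) (d - 1) : ℤ) = ρ - 1)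
    (hmin : min (a - 1) b = min c d) (hminc : min c d = c)
    (hκ : (ρ - 1) * (a - 1 + b) = ρ * (c + d - 2))
    (hσ : (ρ - 1) * (a * b) = ρ * (c * d - 1)) :
    b = ρ ∧ c = ρ ∧ ρ * (d - 1) = (a - 1) * (ρ - 1) ∧
      (Int.gcd (a - 1) b : ℤ) = b ∧ b = min (a - 1) b ∧
      (Int.gcd (c - 1) (d - 1) : ℤ) = c - 1 ∧ (c - 1) ∣ (d - 1) :=
  chain_vs_loop_arithmetic_general a b c d ρ hb hρdef hρ2 hgcd hmin hminc hκ hσ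
end
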